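/- arXiv:1611.02830 — 7 statements merged into one kernel-verified Lean document; each statement's English description precedes it below -/
import Mathlib

section
/- The p-weighted average of the estimated rewards equals the actual reward of the chosen arm: Σ_{y∈F} p_y·R̂_y = Σ_{i=1}^N R_i^{(x_i)} + Σ_{(m,n)∈E} R_{mn}^{(x_m x_n)}. -/
open Finset

/-- **Lemma 1 of the paper.**
The `p`-weighted average of the estimated rewards equals the actual reward of
the chosen arm `x`:
`Σ_{y∈F} p_y · R̂_y = Σ_{i=1}^N R_i^{(x_i)} + Σ_{(m,n)∈E} R_{mn}^{(x_m x_n)}`. -/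
theorem mabsta_weighted_estimate_eq_actual_reward
    (N M : ℕ) (hN : 1 ≤ N) (hM : 1 ≤ M)
    (E : Finset (Fin N × Fin N)) (hE : ∀ e ∈ E, e.1 ≠ e.2)
    (p : (Fin N → Fin M) → ℝ)
    (hp0 : ∀ y, 0 ≤ p y) (hp1 : ∑ y : Fin N → Fin M, p y = 1)
    (x : Fin N → Fin M)
    (R : Fin N → Fin M → ℝ) (hR : ∀ i j, R i j ∈ Set.Icc (0 : ℝ) 1)
    (Re : Fin N × Fin N → Fin M → Fin M → ℝ)
    (hRe : ∀ e ∈ E, ∀ j k, Re e j k ∈ Set.Icc (0 : ℝ) 1)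
    (hPex : ∀ i : Fin N,
      0 < ∑ z ∈ Finset.univ.filter (fun z : Fin N → Fin M => z i = x i), p z)
    (hPtx : ∀ e ∈ E,
      0 < ∑ z ∈ Finset.univ.filter
        (fun z : Fin N → Fin M => z e.1 = x e.1 ∧ z e.2 = x e.2), p z)
    (Rhat : Fin N → Fin M → ℝ)
    (hRhat : ∀ i j, Rhat i j =
      if j = x i then
        R i j / (∑ z ∈ Finset.univ.filter (fun z : Fin N → Fin M => z i = x i), p z)
      else 0)
    (Rhate : Fin N × Fin N → Fin M → Fin M → ℝ)
    (hRhate : ∀ e ∈ E, ∀ j k, Rhate e j k =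
      if j = x e.1 ∧ k = x e.2 then
        Re e j k / (∑ z ∈ Finset.univ.filter
          (fun z : Fin N → Fin M => z e.1 = x e.1 ∧ z e.2 = x e.2), p z)
      else 0)
    (RhatArm : (Fin N → Fin M) → ℝ)
    (hRhatArm : ∀ y, RhatArm y =
      ∑ i, Rhat i (y i) + ∑ e ∈ E, Rhate e (y e.1) (y e.2)) :
    ∑ y : Fin N → Fin M, p y * RhatArm y
      = ∑ i, R i (x i) + ∑ e ∈ E, Re e (x e.1) (x e.2) := by
  have hterm1 : ∀ i : Fin N, ∑ y : Fin N → Fin M, p y * Rhat i (y i) = R i (x i) := by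
    intro i
    set S := ∑ z ∈ Finset.univ.filter (fun z : Fin N → Fin M => z i = x i), p z with hSdef
    have hS : S ≠ 0 := (hPex i).ne'
    have step : ∀ y : Fin N → Fin M,
        p y * Rhat i (y i) = if y i = x i then p y * (R i (x i) / S) else 0 := by
      intro y
      rw [hRhat]
      split_ifs with h
      · rw [h]
      · ring
    calc ∑ y : Fin N → Fin M, p y * Rhat i (y i)
        = ∑ y ∈ Finset.univ.filter (fun y : Fin N → Fin M => y i = x i),
            p y * (R i (x i) / S) := by
          rw [Finset.sum_filter]
          exact Finset.sum_congr rfl fun y _ => step y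
      _ = S * (R i (x i) / S) := by rw [← Finset.sum_mul]
      _ = R i (x i) := by field_simp
  have hterm2 : ∀ e ∈ E, ∑ y : Fin N → Fin M, p y * Rhate e (y e.1) (y e.2)
      = Re e (x e.1) (x e.2) := by
    intro e he
    set S := ∑ z ∈ Finset.univ.filter
        (fun z : Fin N → Fin M => z e.1 = x e.1 ∧ z e.2 = x e.2), p z with hSdef
    have hS : S ≠ 0 := (hPtx e he).ne'
    have step : ∀ y : Fin N → Fin M,
        p y * Rhate e (y e.1) (y e.2)
          = if y e.1 = x e.1 ∧ y e.2 = x e.2 then p y * (Re e (x e.1) (x e.2) / S) else 0 := by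
      intro y
      rw [hRhate e he]
      split_ifs with h
      · rw [h.1, h.2]
      · ring
    calc ∑ y : Fin N → Fin M, p y * Rhate e (y e.1) (y e.2)
        = ∑ y ∈ Finset.univ.filter
            (fun y : Fin N → Fin M => y e.1 = x e.1 ∧ y e.2 = x e.2),
            p y * (Re e (x e.1) (x e.2) / S) := by
          rw [Finset.sum_filter]
          exact Finset.sum_congr rfl fun y _ => step y
      _ = S * (Re e (x e.1) (x e.2) / S) := by rw [← Finset.sum_mul]
      _ = Re e (x e.1) (x e.2) := by field_simp
  calc ∑ y : Fin N → Fin M, p y * RhatArm y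
      = ∑ y : Fin N → Fin M,
          ((∑ i, p y * Rhat i (y i)) + ∑ e ∈ E, p y * Rhate e (y e.1) (y e.2)) := by
        refine Finset.sum_congr rfl fun y _ => ?_
        rw [hRhatArm y, mul_add, Finset.mul_sum, Finset.mul_sum]
    _ = (∑ y : Fin N → Fin M, ∑ i, p y * Rhat i (y i))
        + ∑ y : Fin N → Fin M, ∑ e ∈ E, p y * Rhate e (y e.1) (y e.2) := by
        rw [Finset.sum_add_distrib]
    _ = (∑ i, ∑ y : Fin N → Fin M, p y * Rhat i (y i))
        + ∑ e ∈ E, ∑ y : Fin N → Fin M, p y * Rhate e (y e.1) (y e.2) := by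
        rw [Finset.sum_comm, Finset.sum_comm (s := Finset.univ) (t := E)]
    _ = ∑ i, R i (x i) + ∑ e ∈ E, Re e (x e.1) (x e.2) := by
        rw [Finset.sum_congr rfl fun i _ => hterm1 i,
            Finset.sum_congr rfl fun e he => hterm2 e he]
end

section
/- The estimated reward of every arm is unbiased: for every y ∈ F, the expectation over the drawn arm x ~ p satisfies Σ_{x∈F} p_x·R̂_y(x) = Σ_{i=1}^N R_i^{(y_i)} + Σ_{(m,n)∈E} R_{mn}^{(y_m y_n)}, where R̂_y(x) denotes the estimated reward of arm y when the drawn arm is x. -/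
open Finset

/-! Each summand of `R̂_y(x)` is an inverse-propensity estimate: it vanishes unless the drawn arm
agrees with `y` on the coordinates the summand looks at, and then it is the reward divided by the
probability of that agreement. Its expectation is therefore the reward itself, and linearity of
expectation finishes the proof. -/

theorem sum_mul_ite_div_fiber_sum {α β : Type*} [Fintype α] [DecidableEq β]
    (p : α → ℝ) (f : α → β) (b : β) (c : ℝ)
    (hb : ∑ z ∈ univ.filter (fun z => f z = b), p z ≠ 0) :
    ∑ x, p x * (if b = f x then c / ∑ z ∈ univ.filter (fun z => f z = f x), p z else 0)
      = c := by
  have hterm : ∀ x, p x * (if b = f x then c / ∑ z ∈ univ.filter (fun z => f z = f x), p z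
      else 0) = if f x = b then p x * (c / ∑ z ∈ univ.filter (fun z => f z = b), p z)
      else 0 := by
    intro x
    by_cases hx : f x = b
    · simp [hx]
    · simp [hx, Ne.symm hx]
  rw [sum_congr rfl fun x _ => hterm x, ← sum_filter, ← sum_mul]
  field_simp

theorem mabsta_estimate_unbiased_general
    (N M : ℕ)
    (E : Finset (Fin N × Fin N))
    (p : (Fin N → Fin M) → ℝ)
    (R : Fin N → Fin M → ℝ)
    (Re : Fin N × Fin N → Fin M → Fin M → ℝ)
    (hPex : ∀ (i : Fin N) (j : Fin M),
      0 < ∑ z ∈ Finset.univ.filter (fun z : Fin N → Fin M => z i = j), p z)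
    (hPtx : ∀ e ∈ E, ∀ j k : Fin M,
      0 < ∑ z ∈ Finset.univ.filter
        (fun z : Fin N → Fin M => z e.1 = j ∧ z e.2 = k), p z)
    (Rhat : (Fin N → Fin M) → Fin N → Fin M → ℝ)
    (hRhat : ∀ (x : Fin N → Fin M) (i : Fin N) (j : Fin M), Rhat x i j =
      if j = x i then
        R i j / (∑ z ∈ Finset.univ.filter (fun z : Fin N → Fin M => z i = x i), p z)
      else 0)
    (Rhate : (Fin N → Fin M) → Fin N × Fin N → Fin M → Fin M → ℝ)
    (hRhate : ∀ (x : Fin N → Fin M), ∀ e ∈ E, ∀ j k : Fin M, Rhate x e j k =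
      if j = x e.1 ∧ k = x e.2 then
        Re e j k / (∑ z ∈ Finset.univ.filter
          (fun z : Fin N → Fin M => z e.1 = x e.1 ∧ z e.2 = x e.2), p z)
      else 0)
    (RhatArm : (Fin N → Fin M) → (Fin N → Fin M) → ℝ)
    (hRhatArm : ∀ x y, RhatArm x y =
      ∑ i, Rhat x i (y i) + ∑ e ∈ E, Rhate x e (y e.1) (y e.2)) :
    ∀ y : Fin N → Fin M,
      ∑ x : Fin N → Fin M, p x * RhatArm x y
        = ∑ i, R i (y i) + ∑ e ∈ E, Re e (y e.1) (y e.2) := by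
  intro y
  have hvertex : ∀ i, ∑ x, p x * Rhat x i (y i) = R i (y i) := fun i => by
    simp_rw [hRhat]
    exact sum_mul_ite_div_fiber_sum p (· i) (y i) _ (hPex i (y i)).ne'
  have hedge : ∀ e ∈ E, ∑ x, p x * Rhate x e (y e.1) (y e.2) = Re e (y e.1) (y e.2) :=
    fun e he => by
      simp_rw [hRhate _ e he]
      simpa only [Prod.mk.injEq] using sum_mul_ite_div_fiber_sum p (fun z => (z e.1, z e.2))
        (y e.1, y e.2) _ (by simpa only [Prod.mk.injEq] using (hPtx e he (y e.1) (y e.2)).ne')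
  simp_rw [hRhatArm, mul_add, sum_add_distrib, mul_sum]
  rw [sum_comm, sum_comm (t := E), sum_congr rfl fun i _ => hvertex i,
    sum_congr rfl hedge]

/-- **Lemma 2 of the paper.**
The estimated reward of every arm is unbiased: for every `y ∈ F`, the expectation
over the drawn arm `x ~ p` satisfies
`Σ_{x∈F} p_x · R̂_y(x) = Σ_{i=1}^N R_i^{(y_i)} + Σ_{(m,n)∈E} R_{mn}^{(y_m y_n)}`. -/
theorem mabsta_estimate_unbiased
    (N M : ℕ) (hN : 1 ≤ N) (hM : 1 ≤ M)
    (E : Finset (Fin N × Fin N)) (hE : ∀ e ∈ E, e.1 ≠ e.2)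
    (p : (Fin N → Fin M) → ℝ)
    (hp0 : ∀ y, 0 ≤ p y) (hp1 : ∑ y : Fin N → Fin M, p y = 1)
    (R : Fin N → Fin M → ℝ) (hR : ∀ i j, R i j ∈ Set.Icc (0 : ℝ) 1)
    (Re : Fin N × Fin N → Fin M → Fin M → ℝ)
    (hRe : ∀ e ∈ E, ∀ j k, Re e j k ∈ Set.Icc (0 : ℝ) 1)
    (hPex : ∀ (i : Fin N) (j : Fin M),
      0 < ∑ z ∈ Finset.univ.filter (fun z : Fin N → Fin M => z i = j), p z)
    (hPtx : ∀ e ∈ E, ∀ j k : Fin M,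
      0 < ∑ z ∈ Finset.univ.filter
        (fun z : Fin N → Fin M => z e.1 = j ∧ z e.2 = k), p z)
    (Rhat : (Fin N → Fin M) → Fin N → Fin M → ℝ)
    (hRhat : ∀ (x : Fin N → Fin M) (i : Fin N) (j : Fin M), Rhat x i j =
      if j = x i then
        R i j / (∑ z ∈ Finset.univ.filter (fun z : Fin N → Fin M => z i = x i), p z)
      else 0)
    (Rhate : (Fin N → Fin M) → Fin N × Fin N → Fin M → Fin M → ℝ)
    (hRhate : ∀ (x : Fin N → Fin M), ∀ e ∈ E, ∀ j k : Fin M, Rhate x e j k =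
      if j = x e.1 ∧ k = x e.2 then
        Re e j k / (∑ z ∈ Finset.univ.filter
          (fun z : Fin N → Fin M => z e.1 = x e.1 ∧ z e.2 = x e.2), p z)
      else 0)
    (RhatArm : (Fin N → Fin M) → (Fin N → Fin M) → ℝ)
    (hRhatArm : ∀ x y, RhatArm x y =
      ∑ i, Rhat x i (y i) + ∑ e ∈ E, Rhate x e (y e.1) (y e.2)) :
    ∀ y : Fin N → Fin M,
      ∑ x : Fin N → Fin M, p x * RhatArm x y
        = ∑ i, R i (y i) + ∑ e ∈ E, Re e (y e.1) (y e.2) :=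
  mabsta_estimate_unbiased_general N M E p R Re hPex hPtx Rhat hRhat Rhate hRhate RhatArm hRhatArm
end

section
/- For any two tasks i and j, the node–node cross term satisfies Σ_{y∈F} p_y·R̂_i^{(y_i)}·R̂_j^{(y_j)} ≤ (1/M^{N−1})·Σ_{y∈F} R̂_i^{(y_i)}. -/
open Finset

def fixEquiv (N M : ℕ) (i : Fin N) (c : Fin M) :
    {y : Fin N → Fin M // y i = c} ≃ ({j : Fin N // j ≠ i} → Fin M) where
  toFun y j := y.1 j
  invFun g := ⟨fun j => if h : j = i then c else g ⟨j, h⟩, by simp⟩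
  left_inv y := by
    ext j
    by_cases h : j = i
    · subst h; simp [y.2]
    · simp [h]
  right_inv g := by
    ext j
    simp [j.2]

lemma card_fix (N M : ℕ) (i : Fin N) (c : Fin M) :
    (Finset.univ.filter (fun y : Fin N → Fin M => y i = c)).card = M ^ (N - 1) := by
  rw [← Fintype.card_subtype]
  rw [Fintype.card_congr (fixEquiv N M i c), Fintype.card_fun, Fintype.card_fin]
  congr 1
  have h1 : Fintype.card {j : Fin N // j = i} = 1 := Fintype.card_subtype_eq i
  have h2 : Fintype.card {j : Fin N // ¬ j = i} = Fintype.card (Fin N) - Fintype.card {j : Fin N // j = i} :=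
    Fintype.card_subtype_compl _
  simp [h1] at h2
  simpa using h2

/-- **node–node cross term, eq. (13) of the paper.**
For any two tasks `i` and `j`,
`Σ_{y∈F} p_y · R̂_i^{(y_i)} · R̂_j^{(y_j)} ≤ (1/M^{N−1}) · Σ_{y∈F} R̂_i^{(y_i)}`. -/
theorem mabsta_node_node_cross_term
    (N M : ℕ) (hN : 1 ≤ N) (hM : 1 ≤ M)
    (E : Finset (Fin N × Fin N)) (hE : ∀ e ∈ E, e.1 ≠ e.2)
    (p : (Fin N → Fin M) → ℝ)
    (hp0 : ∀ y, 0 ≤ p y) (hp1 : ∑ y : Fin N → Fin M, p y = 1)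
    (x : Fin N → Fin M)
    (R : Fin N → Fin M → ℝ) (hR : ∀ i j, R i j ∈ Set.Icc (0 : ℝ) 1)
    (hPex : ∀ i : Fin N,
      0 < ∑ z ∈ Finset.univ.filter (fun z : Fin N → Fin M => z i = x i), p z)
    (Rhat : Fin N → Fin M → ℝ)
    (hRhat : ∀ i j, Rhat i j =
      if j = x i then
        R i j / (∑ z ∈ Finset.univ.filter (fun z : Fin N → Fin M => z i = x i), p z)
      else 0) :
    ∀ i j : Fin N,
      ∑ y : Fin N → Fin M, p y * Rhat i (y i) * Rhat j (y j)
        ≤ (1 / (M : ℝ) ^ (N - 1)) * ∑ y : Fin N → Fin M, Rhat i (y i) := by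
  intro i j
  have hPi0 : 0 < ∑ z ∈ Finset.univ.filter (fun z : Fin N → Fin M => z i = x i), p z := hPex i
  have hPj0 : 0 < ∑ z ∈ Finset.univ.filter (fun z : Fin N → Fin M => z j = x j), p z := hPex j
  set Pi := ∑ z ∈ Finset.univ.filter (fun z : Fin N → Fin M => z i = x i), p z with hPidef
  set Pj := ∑ z ∈ Finset.univ.filter (fun z : Fin N → Fin M => z j = x j), p z with hPjdef
  set ri := R i (x i) / Pi with hridef
  set rj := R j (x j) / Pj with hrjdef
  have hri0 : 0 ≤ ri := div_nonneg (hR i (x i)).1 hPi0.le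
  have hrj0 : 0 ≤ rj := div_nonneg (hR j (x j)).1 hPj0.le
  have hRhati : ∀ m, Rhat i m = if m = x i then ri else 0 := by
    intro m
    rw [hRhat]
    split_ifs with h
    · subst h; rw [hridef, hPidef]
    · rfl
  have hRhatj : ∀ m, Rhat j m = if m = x j then rj else 0 := by
    intro m
    rw [hRhat]
    split_ifs with h
    · subst h; rw [hrjdef, hPjdef]
    · rfl
  have hsum : ∑ y : Fin N → Fin M, Rhat i (y i) = (M : ℝ) ^ (N - 1) * ri := by
    calc ∑ y : Fin N → Fin M, Rhat i (y i)
        = ∑ y : Fin N → Fin M, (if y i = x i then ri else 0) := by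
          exact Finset.sum_congr rfl fun y _ => hRhati (y i)
      _ = ∑ y ∈ Finset.univ.filter (fun y : Fin N → Fin M => y i = x i), ri :=
          (Finset.sum_filter _ _).symm
      _ = ((Finset.univ.filter (fun y : Fin N → Fin M => y i = x i)).card : ℝ) * ri := by
          rw [Finset.sum_const, nsmul_eq_mul]
      _ = (M : ℝ) ^ (N - 1) * ri := by rw [card_fix]; push_cast; ring
  have hMpos : (0 : ℝ) < (M : ℝ) ^ (N - 1) := pow_pos (by exact_mod_cast hM) _
  have hRHS : (1 / (M : ℝ) ^ (N - 1)) * ∑ y : Fin N → Fin M, Rhat i (y i) = ri := by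
    rw [hsum]; field_simp
  rw [hRHS]
  have h1 : ∑ y : Fin N → Fin M, p y * Rhat i (y i) * Rhat j (y j)
      ≤ ∑ y : Fin N → Fin M, (if y j = x j then p y * ri * rj else 0) := by
    apply Finset.sum_le_sum
    intro y _
    rw [hRhati, hRhatj]
    split_ifs with h1 h2 h3
    · exact le_refl _
    · simp
    · have : p y * 0 * rj = 0 := by ring
      rw [this]
      exact mul_nonneg (mul_nonneg (hp0 y) hri0) hrj0
    · simp
  have h2 : ∑ y : Fin N → Fin M, (if y j = x j then p y * ri * rj else 0) = Pj * ri * rj := by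
    rw [← Finset.sum_filter, ← Finset.sum_mul, ← Finset.sum_mul, ← hPjdef]
  have h3 : Pj * rj = R j (x j) := by
    rw [hrjdef, mul_div_cancel₀ _ hPj0.ne']
  have h4 : Pj * ri * rj ≤ ri :=
    calc Pj * ri * rj = ri * (Pj * rj) := by ring
      _ = ri * R j (x j) := by rw [h3]
      _ ≤ ri * 1 := mul_le_mul_of_nonneg_left (hR j (x j)).2 hri0
      _ = ri := mul_one ri
  exact h1.trans (le_of_le_of_eq (le_of_eq h2) rfl |>.trans h4)
end

section
/- For any two edges (m,n) and (u,v) in E, the edge–edge cross term satisfies Σ_{y∈F} p_y·R̂_{mn}^{(y_m y_n)}·R̂_{uv}^{(y_u y_v)} ≤ (1/M^{N−2})·Σ_{y∈F} R̂_{mn}^{(y_m y_n)}. -/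
open Finset

lemma card_fixed_two (N M : ℕ) (m n : Fin N) (hmn : m ≠ n) (a b : Fin M) :
    (Finset.univ.filter (fun f : Fin N → Fin M => f m = a ∧ f n = b)).card
      = M ^ (N - 2) := by
  have e : {f : Fin N → Fin M // f m = a ∧ f n = b} ≃
      ({i : Fin N // i ≠ m ∧ i ≠ n} → Fin M) :=
    { toFun := fun f i => f.1 i.1
      invFun := fun g =>
        ⟨fun i => if h1 : i = m then a else if h2 : i = n then b else g ⟨i, h1, h2⟩,
          by simp, by simp [Ne.symm hmn]⟩
      left_inv := by
        rintro ⟨f, hfa, hfb⟩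
        apply Subtype.ext
        funext i
        dsimp
        split_ifs with h1 h2
        · subst h1; exact hfa.symm
        · subst h2; exact hfb.symm
        · rfl
      right_inv := by
        intro g
        funext i
        rcases i with ⟨i, h1, h2⟩
        simp [h1, h2] }
  have hcard : Fintype.card {i : Fin N // i ≠ m ∧ i ≠ n} = N - 2 := by
    rw [Fintype.card_subtype]
    have : Finset.univ.filter (fun i : Fin N => i ≠ m ∧ i ≠ n)
        = Finset.univ \ {m, n} := by
      ext i; simp [not_or]
    rw [this, Finset.card_sdiff_of_subset (by simp)]
    simp [Finset.card_insert_of_notMem, hmn]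
  calc (Finset.univ.filter (fun f : Fin N → Fin M => f m = a ∧ f n = b)).card
      = Fintype.card {f : Fin N → Fin M // f m = a ∧ f n = b} :=
        (Fintype.card_subtype _).symm
    _ = Fintype.card ({i : Fin N // i ≠ m ∧ i ≠ n} → Fin M) := Fintype.card_congr e
    _ = M ^ (N - 2) := by simp [hcard]

/-- **edge–edge cross term, eq. (14) of the paper.**
For any two edges `(m,n)` and `(u,v)` in `E`,
`Σ_{y∈F} p_y · R̂_{mn}^{(y_m y_n)} · R̂_{uv}^{(y_u y_v)}
  ≤ (1/M^{N−2}) · Σ_{y∈F} R̂_{mn}^{(y_m y_n)}`. -/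
theorem mabsta_edge_edge_cross_term
    (N M : ℕ) (hN : 2 ≤ N) (hM : 1 ≤ M)
    (E : Finset (Fin N × Fin N)) (hE : ∀ e ∈ E, e.1 ≠ e.2)
    (p : (Fin N → Fin M) → ℝ)
    (hp0 : ∀ y, 0 ≤ p y) (hp1 : ∑ y : Fin N → Fin M, p y = 1)
    (x : Fin N → Fin M)
    (Re : Fin N × Fin N → Fin M → Fin M → ℝ)
    (hRe : ∀ e ∈ E, ∀ j k, Re e j k ∈ Set.Icc (0 : ℝ) 1)
    (hPtx : ∀ e ∈ E,
      0 < ∑ z ∈ Finset.univ.filter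
        (fun z : Fin N → Fin M => z e.1 = x e.1 ∧ z e.2 = x e.2), p z)
    (Rhate : Fin N × Fin N → Fin M → Fin M → ℝ)
    (hRhate : ∀ e ∈ E, ∀ j k, Rhate e j k =
      if j = x e.1 ∧ k = x e.2 then
        Re e j k / (∑ z ∈ Finset.univ.filter
          (fun z : Fin N → Fin M => z e.1 = x e.1 ∧ z e.2 = x e.2), p z)
      else 0) :
    ∀ e₁ ∈ E, ∀ e₂ ∈ E,
      ∑ y : Fin N → Fin M,
          p y * Rhate e₁ (y e₁.1) (y e₁.2) * Rhate e₂ (y e₂.1) (y e₂.2)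
        ≤ (1 / (M : ℝ) ^ (N - 2))
            * ∑ y : Fin N → Fin M, Rhate e₁ (y e₁.1) (y e₁.2) := by
  intro e₁ he₁ e₂ he₂
  set P₁ : ℝ := ∑ z ∈ Finset.univ.filter
      (fun z : Fin N → Fin M => z e₁.1 = x e₁.1 ∧ z e₁.2 = x e₁.2), p z with hP₁
  set P₂ : ℝ := ∑ z ∈ Finset.univ.filter
      (fun z : Fin N → Fin M => z e₂.1 = x e₂.1 ∧ z e₂.2 = x e₂.2), p z with hP₂
  have hP₁pos : 0 < P₁ := hPtx e₁ he₁
  have hP₂pos : 0 < P₂ := hPtx e₂ he₂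
  set A : ℝ := Re e₁ (x e₁.1) (x e₁.2) / P₁ with hA
  set B : ℝ := Re e₂ (x e₂.1) (x e₂.2) / P₂ with hB
  have h1 : ∀ y : Fin N → Fin M, Rhate e₁ (y e₁.1) (y e₁.2) =
      if y e₁.1 = x e₁.1 ∧ y e₁.2 = x e₁.2 then A else 0 := by
    intro y
    rw [hRhate e₁ he₁]
    split_ifs with h
    · rw [h.1, h.2]
    · rfl
  have h2 : ∀ y : Fin N → Fin M, Rhate e₂ (y e₂.1) (y e₂.2) =
      if y e₂.1 = x e₂.1 ∧ y e₂.2 = x e₂.2 then B else 0 := by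
    intro y
    rw [hRhate e₂ he₂]
    split_ifs with h
    · rw [h.1, h.2]
    · rfl
  have hA0 : 0 ≤ A := div_nonneg (hRe e₁ he₁ _ _).1 hP₁pos.le
  -- RHS equals A
  have hRHS : (1 / (M : ℝ) ^ (N - 2))
      * ∑ y : Fin N → Fin M, Rhate e₁ (y e₁.1) (y e₁.2) = A := by
    have : ∑ y : Fin N → Fin M, Rhate e₁ (y e₁.1) (y e₁.2)
        = (M : ℝ) ^ (N - 2) * A := by
      simp only [h1]
      rw [← Finset.sum_filter, Finset.sum_const, nsmul_eq_mul,
        card_fixed_two N M e₁.1 e₁.2 (hE e₁ he₁) (x e₁.1) (x e₁.2)]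
      push_cast
      ring
    rw [this]
    have hMpos : (0 : ℝ) < (M : ℝ) ^ (N - 2) := by positivity
    field_simp
  rw [hRHS]
  -- LHS
  have hLHS : ∑ y : Fin N → Fin M,
      p y * Rhate e₁ (y e₁.1) (y e₁.2) * Rhate e₂ (y e₂.1) (y e₂.2)
      = (∑ y ∈ Finset.univ.filter
          (fun y : Fin N → Fin M => (y e₁.1 = x e₁.1 ∧ y e₁.2 = x e₁.2)
            ∧ (y e₂.1 = x e₂.1 ∧ y e₂.2 = x e₂.2)), p y) * (A * B) := by
    rw [Finset.sum_mul, Finset.sum_filter]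
    apply Finset.sum_congr rfl
    intro y _
    rw [h1, h2]
    by_cases hc1 : y e₁.1 = x e₁.1 ∧ y e₁.2 = x e₁.2 <;>
      by_cases hc2 : y e₂.1 = x e₂.1 ∧ y e₂.2 = x e₂.2 <;>
      simp [hc1, hc2] <;> ring
  rw [hLHS]
  -- bound
  set Q : ℝ := ∑ y ∈ Finset.univ.filter
      (fun y : Fin N → Fin M => (y e₁.1 = x e₁.1 ∧ y e₁.2 = x e₁.2)
        ∧ (y e₂.1 = x e₂.1 ∧ y e₂.2 = x e₂.2)), p y with hQ
  have hQ0 : 0 ≤ Q := Finset.sum_nonneg fun y _ => hp0 y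
  have hQP₂ : Q ≤ P₂ := by
    apply Finset.sum_le_sum_of_subset_of_nonneg
    · intro y hy
      simp only [Finset.mem_filter, Finset.mem_univ, true_and] at hy ⊢
      exact hy.2
    · intro y _ _; exact hp0 y
  have hBQ : B * Q ≤ 1 := by
    rw [hB, div_mul_eq_mul_div, div_le_one hP₂pos]
    calc Re e₂ (x e₂.1) (x e₂.2) * Q ≤ 1 * P₂ :=
          mul_le_mul (hRe e₂ he₂ _ _).2 hQP₂ hQ0 zero_le_one
      _ = P₂ := one_mul _
  calc Q * (A * B) = A * (B * Q) := by ring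
    _ ≤ A * 1 := mul_le_mul_of_nonneg_left hBQ hA0
    _ = A := mul_one A
end

section
/- For any task i and any edge (m,n) ∈ E, the node–edge cross term satisfies Σ_{y∈F} p_y·R̂_i^{(y_i)}·R̂_{mn}^{(y_m y_n)} ≤ (1/M^{N−1})·Σ_{y∈F} R̂_i^{(y_i)}. -/
open Finset

/-!
On the support of the edge estimate, `R̂_{mn}` is at most `1 / P(y_m = x_m, y_n = x_n)`, so
`Σ_y p_y R̂_{mn}^{(y_m y_n)} ≤ 1`. The node estimate `R̂_i` is supported on the single value `x_i`,
where it equals `c = R_i^{(x_i)} / P(y_i = x_i) ≥ 0`; hence the cross term is at most `c`, and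
`Σ_y R̂_i^{(y_i)} = M^{N-1} c` because each value of `y_i` is taken by `M^{N-1}` assignments.
-/

section
variable {Ω : Type*} [Fintype Ω]

theorem sum_mul_ite_div_sum_filter_le_one (p r : Ω → ℝ) (A : Ω → Prop) [DecidablePred A]
    (hp : ∀ y, 0 ≤ p y) (hr : ∀ y, A y → r y ≤ 1) :
    ∑ y, p y * (if A y then r y / ∑ z ∈ univ.filter A, p z else 0) ≤ 1 := by
  have hsum : ∑ y, p y * (if A y then r y / ∑ z ∈ univ.filter A, p z else 0)
      = (∑ y ∈ univ.filter A, p y * r y) / ∑ z ∈ univ.filter A, p z := by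
    rw [sum_div, sum_filter (p := A) (f := fun y => p y * r y / ∑ z ∈ univ.filter A, p z)]
    refine sum_congr rfl fun y _ => ?_
    split_ifs <;> ring
  rw [hsum]
  refine div_le_one_of_le₀ (sum_le_sum fun y hy => ?_) (sum_nonneg fun y _ => hp y)
  exact mul_le_of_le_one_right (hp y) (hr y (mem_filter.1 hy).2)

theorem sum_mul_mul_le_of_le (p a b : Ω → ℝ) {c : ℝ} (hc : 0 ≤ c) (ha : ∀ y, a y ≤ c)
    (hpb : ∀ y, 0 ≤ p y * b y) (hb : ∑ y, p y * b y ≤ 1) :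
    ∑ y, p y * a y * b y ≤ c :=
  calc ∑ y, p y * a y * b y
      ≤ ∑ y, c * (p y * b y) := sum_le_sum fun y _ => by
        rw [mul_right_comm, mul_comm]; exact mul_le_mul_of_nonneg_right (ha y) (hpb y)
    _ = c * ∑ y, p y * b y := (mul_sum ..).symm
    _ ≤ c := mul_le_of_le_one_right hc hb

end

theorem Fintype.sum_pi_single_apply {ι α R : Type*} [DecidableEq ι] [Fintype ι] [DecidableEq α]
    [Fintype α] [Semiring R] (i : ι) (a : α) (c : R) :
    ∑ y : ι → α, Pi.single (M := fun _ : α => R) a c (y i) = (card α : R) ^ (card ι - 1) * c := by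
  rw [← piFinset_univ, sum_piFinset_apply, card_univ, sum_pi_single',
    nsmul_eq_mul, Nat.cast_pow]

theorem mabsta_node_edge_cross_term_general
    (N M : ℕ) (hM : 1 ≤ M)
    (E : Finset (Fin N × Fin N))
    (p : (Fin N → Fin M) → ℝ)
    (hp0 : ∀ y, 0 ≤ p y)
    (x : Fin N → Fin M)
    (R : Fin N → Fin M → ℝ) (hR : ∀ i j, R i j ∈ Set.Icc (0 : ℝ) 1)
    (Re : Fin N × Fin N → Fin M → Fin M → ℝ)
    (hRe : ∀ e ∈ E, ∀ j k, Re e j k ∈ Set.Icc (0 : ℝ) 1)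
    (Rhat : Fin N → Fin M → ℝ)
    (hRhat : ∀ i j, Rhat i j =
      if j = x i then
        R i j / (∑ z ∈ Finset.univ.filter (fun z : Fin N → Fin M => z i = x i), p z)
      else 0)
    (Rhate : Fin N × Fin N → Fin M → Fin M → ℝ)
    (hRhate : ∀ e ∈ E, ∀ j k, Rhate e j k =
      if j = x e.1 ∧ k = x e.2 then
        Re e j k / (∑ z ∈ Finset.univ.filter
          (fun z : Fin N → Fin M => z e.1 = x e.1 ∧ z e.2 = x e.2), p z)
      else 0) :
    ∀ i : Fin N, ∀ e ∈ E,
      ∑ y : Fin N → Fin M, p y * Rhat i (y i) * Rhate e (y e.1) (y e.2)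
        ≤ (1 / (M : ℝ) ^ (N - 1)) * ∑ y : Fin N → Fin M, Rhat i (y i) := by
  intro i e he
  set c := R i (x i) / ∑ z ∈ univ.filter (fun z : Fin N → Fin M => z i = x i), p z
  have hc : 0 ≤ c := div_nonneg (hR i (x i)).1 (sum_nonneg fun z _ => hp0 z)
  have hRhat_i : Rhat i = Pi.single (x i) c := by
    ext j
    rw [hRhat, Pi.single_apply]
    split_ifs with hj
    · rw [hj]
    · rfl
  have hRhate_nonneg : ∀ y : Fin N → Fin M, 0 ≤ Rhate e (y e.1) (y e.2) := fun y => by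
    rw [hRhate e he]
    split_ifs
    exacts [div_nonneg (hRe e he _ _).1 (sum_nonneg fun z _ => hp0 z), le_rfl]
  have hMpow : (M : ℝ) ^ (N - 1) ≠ 0 := pow_ne_zero _ (Nat.cast_ne_zero.2 (by omega))
  rw [hRhat_i, Fintype.sum_pi_single_apply, Fintype.card_fin, Fintype.card_fin,
    one_div, inv_mul_cancel_left₀ hMpow]
  refine sum_mul_mul_le_of_le p _ _ hc (fun y => ?_)
    (fun y => mul_nonneg (hp0 y) (hRhate_nonneg y)) ?_
  · rw [Pi.single_apply]
    split_ifs
    exacts [le_rfl, hc]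
  · simp_rw [hRhate e he]
    exact sum_mul_ite_div_sum_filter_le_one p _ _ hp0 fun y _ => (hRe e he _ _).2

/-- **node–edge cross term of the paper.**
For any task `i` and any edge `(m,n) ∈ E`,
`Σ_{y∈F} p_y · R̂_i^{(y_i)} · R̂_{mn}^{(y_m y_n)} ≤ (1/M^{N−1}) · Σ_{y∈F} R̂_i^{(y_i)}`. -/
theorem mabsta_node_edge_cross_term
    (N M : ℕ) (hN : 2 ≤ N) (hM : 1 ≤ M)
    (E : Finset (Fin N × Fin N)) (hE : ∀ e ∈ E, e.1 ≠ e.2)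
    (p : (Fin N → Fin M) → ℝ)
    (hp0 : ∀ y, 0 ≤ p y) (hp1 : ∑ y : Fin N → Fin M, p y = 1)
    (x : Fin N → Fin M)
    (R : Fin N → Fin M → ℝ) (hR : ∀ i j, R i j ∈ Set.Icc (0 : ℝ) 1)
    (Re : Fin N × Fin N → Fin M → Fin M → ℝ)
    (hRe : ∀ e ∈ E, ∀ j k, Re e j k ∈ Set.Icc (0 : ℝ) 1)
    (hPex : ∀ i : Fin N,
      0 < ∑ z ∈ Finset.univ.filter (fun z : Fin N → Fin M => z i = x i), p z)
    (hPtx : ∀ e ∈ E,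
      0 < ∑ z ∈ Finset.univ.filter
        (fun z : Fin N → Fin M => z e.1 = x e.1 ∧ z e.2 = x e.2), p z)
    (Rhat : Fin N → Fin M → ℝ)
    (hRhat : ∀ i j, Rhat i j =
      if j = x i then
        R i j / (∑ z ∈ Finset.univ.filter (fun z : Fin N → Fin M => z i = x i), p z)
      else 0)
    (Rhate : Fin N × Fin N → Fin M → Fin M → ℝ)
    (hRhate : ∀ e ∈ E, ∀ j k, Rhate e j k =
      if j = x e.1 ∧ k = x e.2 then
        Re e j k / (∑ z ∈ Finset.univ.filter
          (fun z : Fin N → Fin M => z e.1 = x e.1 ∧ z e.2 = x e.2), p z)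
      else 0) :
    ∀ i : Fin N, ∀ e ∈ E,
      ∑ y : Fin N → Fin M, p y * Rhat i (y i) * Rhate e (y e.1) (y e.2)
        ≤ (1 / (M : ℝ) ^ (N - 1)) * ∑ y : Fin N → Fin M, Rhat i (y i) :=
  mabsta_node_edge_cross_term_general N M hM E p hp0 x R hR Re hRe Rhat hRhat Rhate hRhate
end

section
/- One step of the MABSTA weight update satisfies W'/W ≤ 1 + (α/(1−γ))·(Σ_{i=1}^N R_i^{(x_i)} + Σ_{(m,n)∈E} R_{mn}^{(x_m x_n)}) + ((e−2)α²/(1−γ))·(|E|/M^{N−2})·Σ_{y∈F} R̂_y, where W = Σ_{y∈F} w_y and W' = Σ_{y∈F} w_y·exp(α·R̂_y). -/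
/-!
Put `q = w / W`, so that `p = (1 - γ) q + γ / M^N`. The estimate `R̂` is a sum of
importance-weighted indicators of the "atoms" `{z | z_i = x_i}` and `{z | z_m = x_m, z_n = x_n}`,
of sizes `M^(N-1)` and `M^(N-2)`; it is unbiased under `p`, and `α R̂ ≤ 1` because `p ≥ γ / M^N`
on every atom. For atoms `A, B` with coefficients `a, b` one has `a b p(A ∩ B) ≤ √(ab)`, and
AM–GM with weights `|A|, |B|` yields `Σ p R̂² ≤ (Σ R̂) Σ_A 1/|A|`, where `α Σ_A 1/|A| = γ / M^N`
by the choice of `α`. Hence, with `e^z ≤ 1 + z + z²` on `[0, 1]`, the second-order term is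
absorbed by the exploration part `-(γ / M^N) Σ R̂` of the first-order term, and
`W'/W ≤ 1 + α/(1-γ) Σ p R̂`; the `(e - 2)` summand of the bound is nonnegative slack.
-/

open Finset

theorem Real.exp_le_one_add_add_sq {z : ℝ} (hz : |z| ≤ 1) : Real.exp z ≤ 1 + z + z ^ 2 := by
  linarith [(abs_le.1 (Real.abs_exp_sub_one_sub_id_le hz)).2]

theorem Fintype.card_filter_forall_mem_apply_eq {ι α : Type*} [Fintype ι] [DecidableEq ι]
    [Fintype α] [DecidableEq α] (S : Finset ι) (x : ι → α) :
    #{z : ι → α | ∀ i ∈ S, z i = x i} = Fintype.card α ^ (Fintype.card ι - #S) := by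
  have hpi : ({z : ι → α | ∀ i ∈ S, z i = x i} : Finset (ι → α))
      = Fintype.piFinset fun j => if j ∈ S then {x j} else univ := by
    ext z
    simp only [mem_filter, mem_univ, true_and, Fintype.mem_piFinset]
    refine forall_congr' fun j => ?_
    split_ifs with hj <;> simp [hj]
  rw [hpi, Fintype.card_piFinset]
  simp only [apply_ite Finset.card, card_singleton, card_univ]
  rw [prod_ite, prod_const_one, one_mul, prod_const, filter_not,
    card_sdiff_of_subset (filter_subset _ _)]
  simp

theorem mul_mul_le_add_div_two {a b Q u v : ℝ} (ha : 0 ≤ a) (hb : 0 ≤ b) (hQ : 0 ≤ Q)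
    (haQ : a * Q ≤ 1) (hbQ : b * Q ≤ 1) (hu : 0 < u) (hv : 0 < v) :
    a * b * Q ≤ (a * (u / v) + b * (v / u)) / 2 := by
  have hsq : (a * b * Q) ^ 2 ≤ (a * (u / v)) * (b * (v / u)) := by
    have hab : (a * (u / v)) * (b * (v / u)) = a * b := by field_simp
    rw [hab]
    nlinarith [mul_le_one₀ haQ (mul_nonneg hb hQ) hbQ, mul_nonneg ha hb]
  nlinarith [sq_nonneg (a * (u / v) - b * (v / u)), mul_nonneg (mul_nonneg ha hb) hQ,
    mul_nonneg ha (div_pos hu hv).le, mul_nonneg hb (div_pos hv hu).le]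

section IndicatorSums

variable {F T : Type*} [Fintype F] [DecidableEq F]

theorem sum_mul_ite_mem (p : F → ℝ) (B : Finset F) (b : ℝ) :
    ∑ y, p y * (if y ∈ B then b else 0) = (∑ y ∈ B, p y) * b := by
  simp_rw [mul_ite, mul_zero]
  rw [sum_ite_mem, univ_inter, sum_mul]

theorem sum_mul_ite_mul_ite (p : F → ℝ) (A B : Finset F) (a b : ℝ) :
    ∑ y, p y * (if y ∈ A then a else 0) * (if y ∈ B then b else 0)
      = a * b * ∑ y ∈ A ∩ B, p y := by
  calc _ = ∑ y, a * b * if y ∈ A ∩ B then p y else 0 := by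
        refine sum_congr rfl fun y _ => ?_
        by_cases hA : y ∈ A <;> by_cases hB : y ∈ B <;> simp [hA, hB]; ring
    _ = _ := by rw [← mul_sum, sum_ite_mem, univ_inter]

theorem sum_mul_sq_sum_ite_le {p : F → ℝ} {A : T → Finset F} {c ν : T → ℝ} {s : Finset T}
    (hp : ∀ y, 0 ≤ p y) (hc : ∀ t ∈ s, 0 ≤ c t) (hν : ∀ t ∈ s, 0 < ν t)
    (hcA : ∀ t ∈ s, c t * ∑ y ∈ A t, p y ≤ 1) :
    ∑ y, p y * (∑ t ∈ s, if y ∈ A t then c t else 0) ^ 2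
      ≤ (∑ t ∈ s, c t * ν t) * ∑ t ∈ s, (ν t)⁻¹ := by
  have hsym : ∑ t ∈ s, ∑ t' ∈ s, (c t * (ν t / ν t') + c t' * (ν t' / ν t)) / 2
      = (∑ t ∈ s, c t * ν t) * ∑ t ∈ s, (ν t)⁻¹ := by
    simp only [add_div, sum_add_distrib]
    rw [sum_comm (f := fun t t' => c t' * (ν t' / ν t) / 2), ← two_mul, sum_mul_sum, mul_sum]
    exact sum_congr rfl fun t _ => by rw [mul_sum]; exact sum_congr rfl fun t' _ => by ring
  calc ∑ y, p y * (∑ t ∈ s, if y ∈ A t then c t else 0) ^ 2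
      = ∑ t ∈ s, ∑ t' ∈ s, c t * c t' * ∑ y ∈ A t ∩ A t', p y := by
        simp_rw [sq, sum_mul_sum, mul_sum, ← mul_assoc]
        rw [sum_comm]
        refine sum_congr rfl fun t _ => ?_
        rw [sum_comm]
        exact sum_congr rfl fun t' _ => (sum_mul_ite_mul_ite p _ _ _ _).trans (mul_sum _ _ _)
    _ ≤ ∑ t ∈ s, ∑ t' ∈ s, (c t * (ν t / ν t') + c t' * (ν t' / ν t)) / 2 := by
        gcongr with t ht t' ht'
        refine mul_mul_le_add_div_two (hc t ht) (hc t' ht') (sum_nonneg fun y _ => hp y)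
          ((mul_le_mul_of_nonneg_left ?_ (hc t ht)).trans (hcA t ht))
          ((mul_le_mul_of_nonneg_left ?_ (hc t' ht')).trans (hcA t' ht')) (hν t ht) (hν t' ht')
        · exact sum_le_sum_of_subset_of_nonneg inter_subset_left fun y _ _ => hp y
        · exact sum_le_sum_of_subset_of_nonneg inter_subset_right fun y _ _ => hp y
    _ = _ := hsym

end IndicatorSums

section ImportanceWeighting

variable {F T : Type*} [DecidableEq F]

noncomputable def ipwEstimate (p : F → ℝ) (A : T → Finset F) (r : T → ℝ) (s : Finset T)
    (y : F) : ℝ :=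
  ∑ t ∈ s, if y ∈ A t then r t / ∑ z ∈ A t, p z else 0

variable {p : F → ℝ} {A : T → Finset F} {r : T → ℝ} {s : Finset T}

theorem sum_mul_ipwEstimate [Fintype F] (hp : ∀ y, 0 < p y) (hA : ∀ t ∈ s, (A t).Nonempty) :
    ∑ y, p y * ipwEstimate p A r s y = ∑ t ∈ s, r t := by
  simp_rw [ipwEstimate, mul_sum]
  rw [sum_comm]
  refine sum_congr rfl fun t ht => ?_
  rw [sum_mul_ite_mem, mul_div_cancel₀ _ (sum_pos (fun z _ => hp z) (hA t ht)).ne']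

theorem sum_ipwEstimate [Fintype F] :
    ∑ y, ipwEstimate p A r s y = ∑ t ∈ s, r t / (∑ z ∈ A t, p z) * #(A t) := by
  simp_rw [ipwEstimate]
  rw [sum_comm]
  refine sum_congr rfl fun t _ => ?_
  rw [sum_ite_mem, univ_inter, sum_const, nsmul_eq_mul, mul_comm]

theorem ipwEstimate_nonneg (hp : ∀ y, 0 ≤ p y) (hr : ∀ t ∈ s, 0 ≤ r t) (y : F) :
    0 ≤ ipwEstimate p A r s y :=
  sum_nonneg fun t ht => by
    split_ifs
    exacts [div_nonneg (hr t ht) (sum_nonneg fun z _ => hp z), le_rfl]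

theorem ipwEstimate_le {δ : ℝ} (hδ : 0 < δ) (hp : ∀ y, δ ≤ p y) (hA : ∀ t ∈ s, (A t).Nonempty)
    (hr : ∀ t ∈ s, r t ≤ 1) (y : F) :
    ipwEstimate p A r s y ≤ δ⁻¹ * ∑ t ∈ s, ((#(A t) : ℝ))⁻¹ := by
  rw [mul_sum]
  refine sum_le_sum fun t ht => ?_
  have hcard : (0 : ℝ) < #(A t) := by exact_mod_cast (hA t ht).card_pos
  have hP : δ * #(A t) ≤ ∑ z ∈ A t, p z := by
    simpa [mul_comm] using card_nsmul_le_sum (A t) p δ fun z _ => hp z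
  split_ifs
  · calc r t / ∑ z ∈ A t, p z ≤ 1 / (δ * #(A t)) :=
          div_le_div₀ zero_le_one (hr t ht) (by positivity) hP
      _ = δ⁻¹ * (#(A t) : ℝ)⁻¹ := by rw [one_div, mul_inv]
  · positivity

theorem sum_mul_sq_ipwEstimate_le [Fintype F] (hp : ∀ y, 0 < p y)
    (hA : ∀ t ∈ s, (A t).Nonempty) (hr : ∀ t ∈ s, r t ∈ Set.Icc (0 : ℝ) 1) :
    ∑ y, p y * ipwEstimate p A r s y ^ 2
      ≤ (∑ y, ipwEstimate p A r s y) * ∑ t ∈ s, ((#(A t) : ℝ))⁻¹ := by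
  have hP : ∀ t ∈ s, 0 < ∑ z ∈ A t, p z := fun t ht => sum_pos (fun z _ => hp z) (hA t ht)
  rw [sum_ipwEstimate]
  exact sum_mul_sq_sum_ite_le (fun y => (hp y).le)
    (fun t ht => div_nonneg (hr t ht).1 (hP t ht).le)
    (fun t ht => by exact_mod_cast (hA t ht).card_pos)
    (fun t ht => by rw [div_mul_cancel₀ _ (hP t ht).ne']; exact (hr t ht).2)

end ImportanceWeighting

theorem sum_mul_exp_le_of_sum_mul_sq_le {F : Type*} [Fintype F] {q p f : F → ℝ} {γ δ α : ℝ}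
    (hq : ∀ y, 0 ≤ q y) (hq1 : ∑ y, q y = 1) (hγ : γ < 1) (hδ : 0 ≤ δ)
    (hp : ∀ y, p y = (1 - γ) * q y + δ) (hα : 0 ≤ α) (hf : ∀ y, 0 ≤ f y)
    (hαf : ∀ y, α * f y ≤ 1) (hsq : α * ∑ y, p y * f y ^ 2 ≤ δ * ∑ y, f y) :
    ∑ y, q y * Real.exp (α * f y) ≤ 1 + α / (1 - γ) * ∑ y, p y * f y := by
  have hmean : (1 - γ) * ∑ y, q y * f y = ∑ y, p y * f y - δ * ∑ y, f y := by
    simp only [hp, mul_sum, ← sum_sub_distrib]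
    exact sum_congr rfl fun y _ => by ring
  have hsq' : (1 - γ) * ∑ y, q y * f y ^ 2 ≤ ∑ y, p y * f y ^ 2 := by
    rw [mul_sum]
    exact sum_le_sum fun y _ => by rw [hp y]; nlinarith [mul_nonneg hδ (sq_nonneg (f y))]
  have hgain : (1 - γ) * (α * ∑ y, q y * f y + α ^ 2 * ∑ y, q y * f y ^ 2)
      ≤ α * ∑ y, p y * f y := calc
    _ = α * ((1 - γ) * ∑ y, q y * f y) + α * (α * ((1 - γ) * ∑ y, q y * f y ^ 2)) := by ring
    _ ≤ α * (∑ y, p y * f y - δ * ∑ y, f y) + α * (α * ∑ y, p y * f y ^ 2) := by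
        rw [hmean]; gcongr
    _ ≤ α * (∑ y, p y * f y - δ * ∑ y, f y) + α * (δ * ∑ y, f y) := by gcongr
    _ = α * ∑ y, p y * f y := by ring
  calc ∑ y, q y * Real.exp (α * f y) ≤ ∑ y, q y * (1 + α * f y + (α * f y) ^ 2) := by
        gcongr with y
        · exact hq y
        · exact Real.exp_le_one_add_add_sq
            (abs_le.2 ⟨by linarith [mul_nonneg hα (hf y)], hαf y⟩)
    _ = 1 + (α * ∑ y, q y * f y + α ^ 2 * ∑ y, q y * f y ^ 2) := by
        simp_rw [mul_add, mul_one, sum_add_distrib, hq1, mul_sum, add_assoc]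
        congr 2 <;> exact sum_congr rfl fun y _ => by ring
    _ ≤ 1 + α / (1 - γ) * ∑ y, p y * f y := by
        rw [div_mul_eq_mul_div, add_le_add_iff_left, le_div_iff₀ (by linarith), mul_comm]
        exact hgain

namespace Mabsta

variable {N M : ℕ}

def atom (x : Fin N → Fin M) : Fin N ⊕ Fin N × Fin N → Finset (Fin N → Fin M) :=
  Sum.elim (fun i => univ.filter fun z => z i = x i)
    (fun e => univ.filter fun z => z e.1 = x e.1 ∧ z e.2 = x e.2)

def atomReward (R : Fin N → Fin M → ℝ) (Re : Fin N × Fin N → Fin M → Fin M → ℝ)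
    (x : Fin N → Fin M) : Fin N ⊕ Fin N × Fin N → ℝ :=
  Sum.elim (fun i => R i (x i)) (fun e => Re e (x e.1) (x e.2))

theorem x_mem_atom (x : Fin N → Fin M) (t : Fin N ⊕ Fin N × Fin N) : x ∈ atom x t := by
  cases t <;> simp [atom]

theorem card_atom_inl (x : Fin N → Fin M) (i : Fin N) : #(atom x (.inl i)) = M ^ (N - 1) := by
  simpa [atom] using Fintype.card_filter_forall_mem_apply_eq {i} x

theorem card_atom_inr (x : Fin N → Fin M) {e : Fin N × Fin N} (he : e.1 ≠ e.2) :
    #(atom x (.inr e)) = M ^ (N - 2) := by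
  simpa [atom, he] using Fintype.card_filter_forall_mem_apply_eq {e.1, e.2} x

theorem atomReward_mem_Icc {E : Finset (Fin N × Fin N)} {R : Fin N → Fin M → ℝ}
    {Re : Fin N × Fin N → Fin M → Fin M → ℝ} (hR : ∀ i j, R i j ∈ Set.Icc (0 : ℝ) 1)
    (hRe : ∀ e ∈ E, ∀ j k, Re e j k ∈ Set.Icc (0 : ℝ) 1) (x : Fin N → Fin M) :
    ∀ t ∈ univ.disjSum E, atomReward R Re x t ∈ Set.Icc (0 : ℝ) 1
  | .inl i, _ => hR i (x i)
  | .inr e, ht => hRe e (inr_mem_disjSum.1 ht) _ _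

theorem sum_inv_card_atom (hN : 2 ≤ N) (hM : 0 < M) (E : Finset (Fin N × Fin N))
    (hE : ∀ e ∈ E, e.1 ≠ e.2) (x : Fin N → Fin M) :
    ∑ t ∈ univ.disjSum E, ((#(atom x t) : ℝ))⁻¹ = M * (N + #E * M) / M ^ N := by
  have hM' : (M : ℝ) ≠ 0 := by positivity
  have hpow : (M : ℝ) ^ N = M ^ (N - 2) * M * M := by
    rw [mul_assoc, ← sq, ← pow_add, Nat.sub_add_cancel hN]
  have hpow' : (M : ℝ) ^ (N - 1) = M ^ (N - 2) * M := by
    rw [← pow_succ]; congr 1; omega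
  have hinr : ∑ e ∈ E, ((#(atom x (.inr e)) : ℝ))⁻¹ = #E * ((M : ℝ) ^ (N - 2))⁻¹ := by
    rw [sum_congr rfl fun e he => by rw [card_atom_inr x (hE e he), Nat.cast_pow], sum_const,
      nsmul_eq_mul]
  rw [sum_disjSum, hinr]
  simp only [card_atom_inl, sum_const, card_univ, Fintype.card_fin, nsmul_eq_mul, Nat.cast_pow,
    hpow, hpow']
  field_simp

theorem rhat_eq_ipwEstimate {E : Finset (Fin N × Fin N)} {p : (Fin N → Fin M) → ℝ}
    {x : Fin N → Fin M} {R : Fin N → Fin M → ℝ} {Re : Fin N × Fin N → Fin M → Fin M → ℝ}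
    {Rhat : Fin N → Fin M → ℝ} {Rhate : Fin N × Fin N → Fin M → Fin M → ℝ}
    (hRhat : ∀ i j, Rhat i j =
      if j = x i then
        R i j / (∑ z ∈ Finset.univ.filter (fun z : Fin N → Fin M => z i = x i), p z)
      else 0)
    (hRhate : ∀ e ∈ E, ∀ j k, Rhate e j k =
      if j = x e.1 ∧ k = x e.2 then
        Re e j k / (∑ z ∈ Finset.univ.filter
          (fun z : Fin N → Fin M => z e.1 = x e.1 ∧ z e.2 = x e.2), p z)
      else 0) (y : Fin N → Fin M) :
    ∑ i, Rhat i (y i) + ∑ e ∈ E, Rhate e (y e.1) (y e.2)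
      = ipwEstimate p (atom x) (atomReward R Re x) (univ.disjSum E) y := by
  rw [ipwEstimate, sum_disjSum]
  congr 1
  · refine sum_congr rfl fun i _ => ?_
    by_cases h : y i = x i <;> simp [hRhat, atom, atomReward, h]
  · refine sum_congr rfl fun e he => ?_
    by_cases h : y e.1 = x e.1 ∧ y e.2 = x e.2 <;> simp [hRhate e he, atom, atomReward, h]

theorem sum_mul_exp_ipwEstimate_le {E : Finset (Fin N × Fin N)} {R : Fin N → Fin M → ℝ}
    {Re : Fin N × Fin N → Fin M → Fin M → ℝ} {x : Fin N → Fin M} {q p : (Fin N → Fin M) → ℝ}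
    {γ α : ℝ} (hN : 2 ≤ N) (hM : 0 < M) (hE : ∀ e ∈ E, e.1 ≠ e.2) (hγ0 : 0 < γ) (hγ1 : γ < 1)
    (hα : α = γ / (M * (N + #E * M))) (hq : ∀ y, 0 ≤ q y) (hq1 : ∑ y, q y = 1)
    (hp : ∀ y, p y = (1 - γ) * q y + γ / M ^ N)
    (hr : ∀ t ∈ univ.disjSum E, atomReward R Re x t ∈ Set.Icc (0 : ℝ) 1) :
    ∑ y, q y * Real.exp (α * ipwEstimate p (atom x) (atomReward R Re x) (univ.disjSum E) y)
      ≤ 1 + α / (1 - γ) * ∑ t ∈ univ.disjSum E, atomReward R Re x t := by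
  set δ := γ / (M : ℝ) ^ N with hδ_def
  set s : Finset (Fin N ⊕ Fin N × Fin N) := univ.disjSum E
  set f := ipwEstimate p (atom x) (atomReward R Re x) s
  have hδ : 0 < δ := by positivity
  have hα0 : 0 ≤ α := by rw [hα]; positivity
  have hpδ : ∀ y, δ ≤ p y := fun y => by rw [hp y]; nlinarith [hq y]
  have hpos : ∀ y, 0 < p y := fun y => hδ.trans_le (hpδ y)
  have hA : ∀ t ∈ s, (atom x t).Nonempty := fun t _ => ⟨x, x_mem_atom x t⟩
  have hαK : α * ∑ t ∈ s, ((#(atom x t) : ℝ))⁻¹ = δ := by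
    rw [sum_inv_card_atom hN hM E hE x, hα, hδ_def]
    field_simp
  have hαf : ∀ y, α * f y ≤ 1 := fun y => calc
    α * f y ≤ α * (δ⁻¹ * ∑ t ∈ s, ((#(atom x t) : ℝ))⁻¹) :=
      mul_le_mul_of_nonneg_left (ipwEstimate_le hδ hpδ hA (fun t ht => (hr t ht).2) y) hα0
    _ = 1 := by rw [mul_left_comm, hαK, inv_mul_cancel₀ hδ.ne']
  have hsq : α * ∑ y, p y * f y ^ 2 ≤ δ * ∑ y, f y := calc
    α * ∑ y, p y * f y ^ 2 ≤ α * ((∑ y, f y) * ∑ t ∈ s, ((#(atom x t) : ℝ))⁻¹) :=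
      mul_le_mul_of_nonneg_left (sum_mul_sq_ipwEstimate_le hpos hA hr) hα0
    _ = δ * ∑ y, f y := by rw [← hαK]; ring
  rw [← sum_mul_ipwEstimate hpos hA]
  exact sum_mul_exp_le_of_sum_mul_sq_le hq hq1 hγ1 hδ.le hp hα0
    (ipwEstimate_nonneg (fun y => (hpos y).le) fun t ht => (hr t ht).1) hαf hsq

end Mabsta

open Mabsta in
theorem mabsta_one_step_weight_bound_general
    (N M : ℕ) (hN : 2 ≤ N) (hM : 3 ≤ M)
    (E : Finset (Fin N × Fin N)) (hE : ∀ e ∈ E, e.1 ≠ e.2)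
    (γ : ℝ) (hγ0 : 0 < γ) (hγ1 : γ < 1)
    (α : ℝ) (hα : α = γ / ((M : ℝ) * ((N : ℝ) + (E.card : ℝ) * (M : ℝ))))
    (w : (Fin N → Fin M) → ℝ) (hw : ∀ y, 0 < w y)
    (p : (Fin N → Fin M) → ℝ)
    (hp : ∀ y, p y =
      (1 - γ) * (w y / ∑ z : Fin N → Fin M, w z) + γ / (M : ℝ) ^ N)
    (x : Fin N → Fin M)
    (R : Fin N → Fin M → ℝ) (hR : ∀ i j, R i j ∈ Set.Icc (0 : ℝ) 1)
    (Re : Fin N × Fin N → Fin M → Fin M → ℝ)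
    (hRe : ∀ e ∈ E, ∀ j k, Re e j k ∈ Set.Icc (0 : ℝ) 1)
    (Rhat : Fin N → Fin M → ℝ)
    (hRhat : ∀ i j, Rhat i j =
      if j = x i then
        R i j / (∑ z ∈ Finset.univ.filter (fun z : Fin N → Fin M => z i = x i), p z)
      else 0)
    (Rhate : Fin N × Fin N → Fin M → Fin M → ℝ)
    (hRhate : ∀ e ∈ E, ∀ j k, Rhate e j k =
      if j = x e.1 ∧ k = x e.2 then
        Re e j k / (∑ z ∈ Finset.univ.filter
          (fun z : Fin N → Fin M => z e.1 = x e.1 ∧ z e.2 = x e.2), p z)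
      else 0)
    (RhatArm : (Fin N → Fin M) → ℝ)
    (hRhatArm : ∀ y, RhatArm y =
      ∑ i, Rhat i (y i) + ∑ e ∈ E, Rhate e (y e.1) (y e.2)) :
    (∑ y : Fin N → Fin M, w y * Real.exp (α * RhatArm y))
        / (∑ y : Fin N → Fin M, w y)
      ≤ 1
        + α / (1 - γ) * (∑ i, R i (x i) + ∑ e ∈ E, Re e (x e.1) (x e.2))
        + (Real.exp 1 - 2) * α ^ 2 / (1 - γ) * ((E.card : ℝ) / (M : ℝ) ^ (N - 2))
            * ∑ y : Fin N → Fin M, RhatArm y := by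
  have hM0 : 0 < M := by omega
  have : Nonempty (Fin N → Fin M) := ⟨fun _ => ⟨0, hM0⟩⟩
  set W := ∑ z : Fin N → Fin M, w z
  have hW : 0 < W := sum_pos (fun y _ => hw y) univ_nonempty
  have hr := atomReward_mem_Icc hR hRe x
  have hf : RhatArm = ipwEstimate p (atom x) (atomReward R Re x) (univ.disjSum E) :=
    funext fun y => (hRhatArm y).trans (rhat_eq_ipwEstimate hRhat hRhate y)
  have hf0 : ∀ y, 0 ≤ RhatArm y :=
    hf ▸ ipwEstimate_nonneg (fun y => hp y ▸ add_nonneg (mul_nonneg (by linarith)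
      (div_pos (hw y) hW).le) (by positivity)) fun t ht => (hr t ht).1
  have hstep := sum_mul_exp_ipwEstimate_le (q := fun y => w y / W) hN hM0 hE hγ0 hγ1 hα
    (fun y => (div_pos (hw y) hW).le) (by rw [← sum_div, div_self hW.ne']) hp hr
  rw [← hf, sum_disjSum] at hstep
  have hslack : 0 ≤ (Real.exp 1 - 2) * α ^ 2 / (1 - γ) * ((#E : ℝ) / (M : ℝ) ^ (N - 2))
      * ∑ y, RhatArm y := by
    have he : 0 ≤ Real.exp 1 - 2 := by linarith [Real.add_one_le_exp 1]
    have hγ : 0 < 1 - γ := by linarith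
    have hZ : 0 ≤ ∑ y, RhatArm y := sum_nonneg fun y _ => hf0 y
    positivity
  calc (∑ y, w y * Real.exp (α * RhatArm y)) / W
      = ∑ y, w y / W * Real.exp (α * RhatArm y) := by
        rw [sum_div]; exact sum_congr rfl fun y _ => (div_mul_eq_mul_div _ _ _).symm
    _ ≤ _ := hstep
    _ ≤ _ := le_add_of_nonneg_right hslack

/-- **one-step weight-update bound, eq. (18) of the paper.**
One step of the MABSTA weight update satisfies
`W'/W ≤ 1 + (α/(1−γ))·(Σ_i R_i^{(x_i)} + Σ_{(m,n)∈E} R_{mn}^{(x_m x_n)})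
       + ((e−2)α²/(1−γ))·(|E|/M^{N−2})·Σ_{y∈F} R̂_y`,
where `W = Σ_y w_y` and `W' = Σ_y w_y·exp(α·R̂_y)`. -/
theorem mabsta_one_step_weight_bound
    (N M : ℕ) (hN : 2 ≤ N) (hM : 3 ≤ M)
    (E : Finset (Fin N × Fin N)) (hE : ∀ e ∈ E, e.1 ≠ e.2) (hEcard : 3 ≤ E.card)
    (γ : ℝ) (hγ0 : 0 < γ) (hγ1 : γ < 1)
    (α : ℝ) (hα : α = γ / ((M : ℝ) * ((N : ℝ) + (E.card : ℝ) * (M : ℝ))))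
    (w : (Fin N → Fin M) → ℝ) (hw : ∀ y, 0 < w y)
    (p : (Fin N → Fin M) → ℝ)
    (hp : ∀ y, p y =
      (1 - γ) * (w y / ∑ z : Fin N → Fin M, w z) + γ / (M : ℝ) ^ N)
    (x : Fin N → Fin M)
    (R : Fin N → Fin M → ℝ) (hR : ∀ i j, R i j ∈ Set.Icc (0 : ℝ) 1)
    (Re : Fin N × Fin N → Fin M → Fin M → ℝ)
    (hRe : ∀ e ∈ E, ∀ j k, Re e j k ∈ Set.Icc (0 : ℝ) 1)
    (Rhat : Fin N → Fin M → ℝ)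
    (hRhat : ∀ i j, Rhat i j =
      if j = x i then
        R i j / (∑ z ∈ Finset.univ.filter (fun z : Fin N → Fin M => z i = x i), p z)
      else 0)
    (Rhate : Fin N × Fin N → Fin M → Fin M → ℝ)
    (hRhate : ∀ e ∈ E, ∀ j k, Rhate e j k =
      if j = x e.1 ∧ k = x e.2 then
        Re e j k / (∑ z ∈ Finset.univ.filter
          (fun z : Fin N → Fin M => z e.1 = x e.1 ∧ z e.2 = x e.2), p z)
      else 0)
    (RhatArm : (Fin N → Fin M) → ℝ)
    (hRhatArm : ∀ y, RhatArm y =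
      ∑ i, Rhat i (y i) + ∑ e ∈ E, Rhate e (y e.1) (y e.2)) :
    (∑ y : Fin N → Fin M, w y * Real.exp (α * RhatArm y))
        / (∑ y : Fin N → Fin M, w y)
      ≤ 1
        + α / (1 - γ) * (∑ i, R i (x i) + ∑ e ∈ E, Re e (x e.1) (x e.2))
        + (Real.exp 1 - 2) * α ^ 2 / (1 - γ) * ((E.card : ℝ) / (M : ℝ) ^ (N - 2))
            * ∑ y : Fin N → Fin M, RhatArm y :=
  mabsta_one_step_weight_bound_general N M hN hM E hE γ hγ0 hγ1 α hα w hw p hp x R hR Re hRe Rhat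
    hRhat Rhate hRhate RhatArm hRhatArm
end

section
/- For any fixed realized sequence of drawn arms x^1,…,x^T ∈ F, the MABSTA weights satisfy ln(W_{T+1}/W_1) ≤ (α/(1−γ))·R̂_total + ((e−2)α²/(1−γ))·(|E|/M^{N−2})·Σ_{t=1}^T Σ_{y∈F} R̂_y(t), where R̂_total = Σ_{t=1}^T (Σ_{i=1}^N R_i^{(x^t_i)}(t) + Σ_{(m,n)∈E} R_{mn}^{(x^t_m x^t_n)}(t)). -/
open Finset Real

/-!
An Exp3-style potential argument. Writing `w_y(t) = W_t (p_y(t) - γ/M^N)/(1-γ)` and using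
`e^u ≤ 1 + u + u²` for `|u| ≤ 1`, one round multiplies `W_t` by at most
`1 + α/(1-γ) (Σ_y p_y R̂_y + α Σ_y p_y R̂_y² - (γ/M^N) Σ_y R̂_y)`.
The estimator is unbiased, so `Σ_y p_y R̂_y` is the reward collected in round `t`. Node and edge
estimates are at most `M/γ` and `M²/γ`, so the choice `α = γ/(M(N+|E|M))` makes `α R̂_y ≤ 1`
and lets the uniform exploration term `(γ/M^N) Σ_y R̂_y` dominate the second moment
`α Σ_y p_y R̂_y²`. Hence `ln(W_{t+1}/W_t)` is at most `α/(1-γ)` times that reward; summing over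
`t` bounds `ln(W_{T+1}/W_1)` by the first term of the claim, and the second term is nonnegative.
-/

theorem le_mul_div_sum_add {F : Type*} [Fintype F] {w : F → ℝ} {γ c : ℝ} (hγ : γ ≤ 1)
    (hw : ∀ y, 0 ≤ w y) (y : F) : c ≤ (1 - γ) * (w y / ∑ z, w z) + c :=
  le_add_of_nonneg_left
    (mul_nonneg (sub_nonneg.2 hγ) (div_nonneg (hw y) (sum_nonneg fun z _ => hw z)))

theorem div_mul_le_of_nonneg {a : ℝ} (ha : 0 ≤ a) (b : ℝ) : a / b * b ≤ a := by
  rcases eq_or_ne b 0 with rfl | hb <;> simp [*]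

theorem div_mul_eq_div_of_mul_eq {a b d k : ℝ} (hb : b ≠ 0) (h : k * d = b) :
    a / b * k = a / d := by
  subst h
  have := left_ne_zero_of_mul hb
  have := right_ne_zero_of_mul hb
  field_simp

theorem card_filter_forall_mem_mul_pow {ι α : Type*} [Fintype ι] [DecidableEq ι] [Fintype α]
    [DecidableEq α] (s : Finset ι) (x : ι → α) :
    #{f : ι → α | ∀ i ∈ s, f i = x i} * Fintype.card α ^ #s = Fintype.card α ^ Fintype.card ι := by
  have hpi : ({f : ι → α | ∀ i ∈ s, f i = x i} : Finset (ι → α))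
      = Fintype.piFinset fun i => if i ∈ s then {x i} else univ := by
    ext f
    simp only [mem_filter, mem_univ, true_and, Fintype.mem_piFinset]
    refine forall_congr' fun i => ?_
    split_ifs with hi <;> simp [hi]
  rw [hpi]
  set a := Fintype.card α
  calc #(Fintype.piFinset fun i => if i ∈ s then {x i} else univ) * a ^ #s
      = (∏ i, if i ∈ s then 1 else a) * ∏ i, if i ∈ s then a else 1 := by
        rw [Fintype.card_piFinset, Fintype.prod_ite_mem, prod_const]
        congr 2 with i
        split_ifs <;> simp [a]
    _ = a ^ Fintype.card ι := by
        rw [← prod_mul_distrib, ← card_univ, ← prod_const]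
        exact prod_congr rfl fun i _ => by split_ifs <;> simp

theorem pos_of_succ_eq_mul_exp {F : Type*} {w : ℕ → F → ℝ} {T : ℕ} {g : Fin T → F → ℝ}
    (h0 : ∀ y, 0 < w 0 y) (hsucc : ∀ (t : Fin T) y, w (t + 1) y = w t y * exp (g t y)) :
    ∀ n ≤ T, ∀ y, 0 < w n y := by
  intro n
  induction n with
  | zero => exact fun _ => h0
  | succ n ih =>
    intro hn y
    rw [show w (n + 1) y = _ from hsucc ⟨n, hn⟩ y]
    exact mul_pos (ih (Nat.le_of_succ_le hn) y) (exp_pos _)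

theorem log_div_le_sum_of_log_succ_le {W : ℕ → ℝ} {T : ℕ} {a : Fin T → ℝ}
    (hW : ∀ n ≤ T, 0 < W n) (h : ∀ t : Fin T, log (W (t + 1)) ≤ log (W t) + a t) :
    log (W T / W 0) ≤ ∑ t, a t := by
  rw [log_div (hW T le_rfl).ne' (hW 0 T.zero_le).ne', ← sum_range_sub (fun n => log (W n)),
    ← Fin.sum_univ_eq_sum_range (fun n => log (W (n + 1)) - log (W n))]
  exact sum_le_sum fun t _ => by linarith [h t]

section Exploration

variable {F : Type*} [Fintype F] [Nonempty F] {w p r : F → ℝ} {γ c α : ℝ}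

theorem sum_mul_exp_le_of_exploration (hw : ∀ y, 0 < w y) (hγ : γ < 1) (hc : 0 ≤ c)
    (hα : 0 ≤ α) (hp : ∀ y, p y = (1 - γ) * (w y / ∑ z, w z) + c)
    (hαr : ∀ y, |α * r y| ≤ 1) (hvar : α * ∑ y, p y * r y ^ 2 ≤ c * ∑ y, r y) :
    ∑ y, w y * exp (α * r y) ≤ (∑ y, w y) * (1 + α / (1 - γ) * ∑ y, p y * r y) := by
  set W := ∑ y, w y
  have hW : 0 < W := sum_pos (fun y _ => hw y) univ_nonempty
  have hw_eq : ∀ y, w y = W / (1 - γ) * (p y - c) := fun y => by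
    rw [hp]
    field_simp [(sub_pos.2 hγ).ne', hW.ne']
    ring
  have hexp : ∀ y, exp (α * r y) ≤ 1 + (α * r y + (α * r y) ^ 2) := fun y => by
    linarith [le_abs_self (exp (α * r y) - 1 - α * r y), abs_exp_sub_one_sub_id_le (hαr y)]
  have hquad : ∑ y, (p y - c) * (α * r y + (α * r y) ^ 2) ≤ α * ∑ y, p y * r y :=
    calc ∑ y, (p y - c) * (α * r y + (α * r y) ^ 2)
        ≤ ∑ y, (α * (p y * r y) + α * (α * (p y * r y ^ 2)) - α * (c * r y)) :=
          sum_le_sum fun y _ => by nlinarith [mul_nonneg hc (sq_nonneg (α * r y))]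
      _ = α * ∑ y, p y * r y + α * (α * ∑ y, p y * r y ^ 2 - c * ∑ y, r y) := by
          simp only [sum_sub_distrib, sum_add_distrib, ← mul_sum]
          ring
      _ ≤ α * ∑ y, p y * r y := by nlinarith
  calc ∑ y, w y * exp (α * r y)
      ≤ ∑ y, w y * (1 + (α * r y + (α * r y) ^ 2)) :=
        sum_le_sum fun y _ => mul_le_mul_of_nonneg_left (hexp y) (hw y).le
    _ = W + ∑ y, w y * (α * r y + (α * r y) ^ 2) := by
        simp only [W, mul_add (w _), mul_one, sum_add_distrib]
    _ = W + W / (1 - γ) * ∑ y, (p y - c) * (α * r y + (α * r y) ^ 2) := by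
        rw [mul_sum]
        exact congrArg (W + ·) (sum_congr rfl fun y _ => by rw [hw_eq y]; ring)
    _ ≤ W + W / (1 - γ) * (α * ∑ y, p y * r y) := by
        have := sub_pos.2 hγ
        gcongr
    _ = W * (1 + α / (1 - γ) * ∑ y, p y * r y) := by ring

theorem log_sum_mul_exp_le_of_exploration (hw : ∀ y, 0 < w y) (hγ : γ < 1)
    (hc : 0 ≤ c) (hα : 0 ≤ α) (hp : ∀ y, p y = (1 - γ) * (w y / ∑ z, w z) + c)
    (hαr : ∀ y, |α * r y| ≤ 1) (hvar : α * ∑ y, p y * r y ^ 2 ≤ c * ∑ y, r y) :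
    log (∑ y, w y * exp (α * r y)) ≤ log (∑ y, w y) + α / (1 - γ) * ∑ y, p y * r y := by
  have hsum := sum_mul_exp_le_of_exploration hw hγ hc hα hp hαr hvar
  have hW : 0 < ∑ y, w y := sum_pos (fun y _ => hw y) univ_nonempty
  have hpos : 0 < ∑ y, w y * exp (α * r y) :=
    sum_pos (fun y _ => mul_pos (hw y) (exp_pos _)) univ_nonempty
  have hgrowth : 0 < 1 + α / (1 - γ) * ∑ y, p y * r y :=
    pos_of_mul_pos_right (hpos.trans_le hsum) hW.le
  calc log (∑ y, w y * exp (α * r y))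
      ≤ log ((∑ y, w y) * (1 + α / (1 - γ) * ∑ y, p y * r y)) := log_le_log hpos hsum
    _ = log (∑ y, w y) + log (1 + α / (1 - γ) * ∑ y, p y * r y) := log_mul hW.ne' hgrowth.ne'
    _ ≤ log (∑ y, w y) + α / (1 - γ) * ∑ y, p y * r y := by
        linarith [log_le_sub_one_of_pos hgrowth]

end Exploration

section ImportanceWeighting

variable {F ι : Type*} {p : F → ℝ} {K : ι → Finset F} {r : ι → ℝ} {S : Finset ι}

variable (p K r S) in
noncomputable def importanceWeightSum : ℝ :=
  ∑ k ∈ S, r k / ∑ z ∈ K k, p z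

theorem importanceWeightSum_le_card_div {c m : ℝ} (hp : ∀ y, c ≤ p y)
    (hK : ∀ k ∈ S, c * #(K k) = m) (hm : 0 < m) (hr : ∀ k ∈ S, r k ≤ 1) :
    importanceWeightSum p K r S ≤ #S / m := by
  rw [importanceWeightSum, div_eq_mul_inv, ← nsmul_eq_mul, ← sum_const]
  refine sum_le_sum fun k hk => ?_
  have hmP : m ≤ ∑ z ∈ K k, p z := by
    rw [← hK k hk, mul_comm, ← nsmul_eq_mul, ← sum_const]
    exact sum_le_sum fun z _ => hp z
  calc r k / ∑ z ∈ K k, p z ≤ 1 / ∑ z ∈ K k, p z :=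
        div_le_div_of_nonneg_right (hr k hk) (hm.le.trans hmP)
    _ ≤ m⁻¹ := by rw [one_div]; exact inv_anti₀ hm hmP

variable [DecidableEq F]

variable (p K r S) in
noncomputable def importanceEstimate (y : F) : ℝ :=
  ∑ k ∈ S, if y ∈ K k then r k / ∑ z ∈ K k, p z else 0

theorem importanceEstimate_nonneg (hp : ∀ y, 0 ≤ p y) (hr : ∀ k ∈ S, 0 ≤ r k) (y : F) :
    0 ≤ importanceEstimate p K r S y :=
  sum_nonneg fun k hk => by
    split_ifs
    exacts [div_nonneg (hr k hk) (sum_nonneg fun z _ => hp z), le_rfl]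

theorem importanceEstimate_le (hp : ∀ y, 0 ≤ p y) (hr : ∀ k ∈ S, 0 ≤ r k) (y : F) :
    importanceEstimate p K r S y ≤ importanceWeightSum p K r S :=
  sum_le_sum fun k hk => by
    split_ifs
    exacts [le_rfl, div_nonneg (hr k hk) (sum_nonneg fun z _ => hp z)]

theorem sum_mul_importanceEstimate [Fintype F] (hp : ∀ y, 0 < p y)
    (hK : ∀ k ∈ S, (K k).Nonempty) :
    ∑ y, p y * importanceEstimate p K r S y = ∑ k ∈ S, r k := by
  simp only [importanceEstimate, mul_sum]
  rw [sum_comm]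
  refine sum_congr rfl fun k hk => ?_
  simp only [mul_ite, mul_zero]
  rw [Fintype.sum_ite_mem, ← sum_mul,
    mul_div_cancel₀ _ (sum_pos (fun z _ => hp z) (hK k hk)).ne']

theorem mul_sum_importanceEstimate [Fintype F] {c m : ℝ} (hK : ∀ k ∈ S, c * #(K k) = m) :
    c * ∑ y, importanceEstimate p K r S y = m * importanceWeightSum p K r S := by
  simp only [importanceEstimate, importanceWeightSum]
  rw [sum_comm, mul_sum, mul_sum]
  refine sum_congr rfl fun k hk => ?_
  rw [Fintype.sum_ite_mem, sum_const, nsmul_eq_mul, ← mul_assoc, hK k hk]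

end ImportanceWeighting

section Mabsta

variable {N M : ℕ}

def nodeEvent (x : Fin N → Fin M) (i : Fin N) : Finset (Fin N → Fin M) := {z | z i = x i}

def edgeEvent (x : Fin N → Fin M) (e : Fin N × Fin N) : Finset (Fin N → Fin M) :=
  {z | z e.1 = x e.1 ∧ z e.2 = x e.2}

/-- The paper's `R̂_y(t)`, with `x = x^t` and `r i`, `re e` the rewards observed at `x`. -/
noncomputable def mabstaEstimate (p : (Fin N → Fin M) → ℝ) (x : Fin N → Fin M) (r : Fin N → ℝ)
    (re : Fin N × Fin N → ℝ) (E : Finset (Fin N × Fin N)) (y : Fin N → Fin M) : ℝ :=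
  importanceEstimate p (nodeEvent x) r univ y + importanceEstimate p (edgeEvent x) re E y

@[simp]
theorem mem_nodeEvent {x y : Fin N → Fin M} {i : Fin N} : y ∈ nodeEvent x i ↔ y i = x i := by
  simp [nodeEvent]

@[simp]
theorem mem_edgeEvent {x y : Fin N → Fin M} {e : Fin N × Fin N} :
    y ∈ edgeEvent x e ↔ y e.1 = x e.1 ∧ y e.2 = x e.2 := by
  simp [edgeEvent]

theorem div_pow_mul_card_nodeEvent (γ : ℝ) (hM : M ≠ 0) (x : Fin N → Fin M) (i : Fin N) :
    γ / M ^ N * #(nodeEvent x i) = γ / M := by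
  have hcard : #(nodeEvent x i) * M = M ^ N := by
    simpa [nodeEvent] using card_filter_forall_mem_mul_pow {i} x
  exact div_mul_eq_div_of_mul_eq (by positivity) (by exact_mod_cast hcard)

theorem div_pow_mul_card_edgeEvent (γ : ℝ) (hM : M ≠ 0) (x : Fin N → Fin M)
    {e : Fin N × Fin N} (he : e.1 ≠ e.2) : γ / M ^ N * #(edgeEvent x e) = γ / M ^ 2 := by
  have hcard : #(edgeEvent x e) * M ^ 2 = M ^ N := by
    simpa [edgeEvent, card_pair he] using card_filter_forall_mem_mul_pow {e.1, e.2} x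
  exact div_mul_eq_div_of_mul_eq (by positivity) (by exact_mod_cast hcard)

variable {E : Finset (Fin N × Fin N)} {p : (Fin N → Fin M) → ℝ} {x : Fin N → Fin M}
  {r : Fin N → ℝ} {re : Fin N × Fin N → ℝ} {γ α : ℝ}

theorem mabstaEstimate_nonneg (hp : ∀ y, 0 ≤ p y) (hr : ∀ i, 0 ≤ r i)
    (hre : ∀ e ∈ E, 0 ≤ re e) (y : Fin N → Fin M) : 0 ≤ mabstaEstimate p x r re E y :=
  add_nonneg (importanceEstimate_nonneg hp (fun i _ => hr i) y) (importanceEstimate_nonneg hp hre y)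

theorem sum_mul_mabstaEstimate (hp : ∀ y, 0 < p y) :
    ∑ y, p y * mabstaEstimate p x r re E y = ∑ i, r i + ∑ e ∈ E, re e := by
  simp only [mabstaEstimate, mul_add, sum_add_distrib]
  rw [sum_mul_importanceEstimate hp fun i _ => ⟨x, mem_nodeEvent.2 rfl⟩,
    sum_mul_importanceEstimate hp fun e _ => ⟨x, mem_edgeEvent.2 ⟨rfl, rfl⟩⟩]

theorem div_pow_mul_sum_mabstaEstimate (hM : M ≠ 0) (hE : ∀ e ∈ E, e.1 ≠ e.2) :
    γ / M ^ N * ∑ y, mabstaEstimate p x r re E y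
      = γ / M * importanceWeightSum p (nodeEvent x) r univ
        + γ / M ^ 2 * importanceWeightSum p (edgeEvent x) re E := by
  rw [← mul_sum_importanceEstimate fun i _ => div_pow_mul_card_nodeEvent γ hM x i,
    ← mul_sum_importanceEstimate fun e he => div_pow_mul_card_edgeEvent γ hM x (hE e he),
    ← mul_add, ← sum_add_distrib]
  rfl

theorem sum_mul_sq_mabstaEstimate_le (hp : ∀ y, 0 < p y) (hr : ∀ i, r i ∈ Set.Icc (0 : ℝ) 1)
    (hre : ∀ e ∈ E, re e ∈ Set.Icc (0 : ℝ) 1) :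
    ∑ y, p y * mabstaEstimate p x r re E y ^ 2
      ≤ (N + 2 * #E) * importanceWeightSum p (nodeEvent x) r univ
        + #E * importanceWeightSum p (edgeEvent x) re E := by
  set A := importanceEstimate p (nodeEvent x) r univ
  set B := importanceEstimate p (edgeEvent x) re E
  set U := importanceWeightSum p (nodeEvent x) r univ
  set V := importanceWeightSum p (edgeEvent x) re E
  have hp0 : ∀ y, 0 ≤ p y := fun y => (hp y).le
  have hA : ∀ y, 0 ≤ A y ∧ A y ≤ U := fun y =>
    ⟨importanceEstimate_nonneg hp0 (fun i _ => (hr i).1) y,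
      importanceEstimate_le hp0 (fun i _ => (hr i).1) y⟩
  have hB : ∀ y, 0 ≤ B y ∧ B y ≤ V := fun y =>
    ⟨importanceEstimate_nonneg hp0 (fun e he => (hre e he).1) y,
      importanceEstimate_le hp0 (fun e he => (hre e he).1) y⟩
  have hpA : ∑ y, p y * A y ≤ N := by
    rw [sum_mul_importanceEstimate hp fun i _ => ⟨x, mem_nodeEvent.2 rfl⟩]
    exact (sum_le_sum fun i _ => (hr i).2).trans (by simp)
  have hpB : ∑ y, p y * B y ≤ #E := by
    rw [sum_mul_importanceEstimate hp fun e _ => ⟨x, mem_edgeEvent.2 ⟨rfl, rfl⟩⟩]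
    exact (sum_le_sum fun e he => (hre e he).2).trans (by simp)
  -- `A ≤ U` and `B ≤ V` bound the second moment by first moments, i.e. by rewards
  have hsq : ∀ y, p y * (A y + B y) ^ 2 ≤ U * (p y * A y) + (2 * U + V) * (p y * B y) :=
    fun y => by
      have : (A y + B y) ^ 2 ≤ U * A y + (2 * U + V) * B y := by
        nlinarith [hA y, hB y]
      nlinarith [hp y]
  have hU : 0 ≤ U := (hA x).1.trans (hA x).2
  have hV : 0 ≤ V := (hB x).1.trans (hB x).2
  calc ∑ y, p y * (A y + B y) ^ 2
      ≤ U * ∑ y, p y * A y + (2 * U + V) * ∑ y, p y * B y :=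
        (sum_le_sum fun y _ => hsq y).trans_eq (by rw [sum_add_distrib, ← mul_sum, ← mul_sum])
    _ ≤ (N + 2 * #E) * U + #E * V := by
        nlinarith [mul_le_mul_of_nonneg_left hpA hU,
          mul_le_mul_of_nonneg_left hpB (by positivity : 0 ≤ 2 * U + V)]

theorem abs_mul_mabstaEstimate_le_one (hM : M ≠ 0) (hE : ∀ e ∈ E, e.1 ≠ e.2) (hγ : 0 < γ)
    (hα : α = γ / (M * (N + #E * M))) (hp : ∀ y, γ / M ^ N ≤ p y)
    (hr : ∀ i, r i ∈ Set.Icc (0 : ℝ) 1) (hre : ∀ e ∈ E, re e ∈ Set.Icc (0 : ℝ) 1)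
    (y : Fin N → Fin M) : |α * mabstaEstimate p x r re E y| ≤ 1 := by
  have hp0 : ∀ y, 0 ≤ p y := fun y => (by positivity : 0 ≤ γ / M ^ N).trans (hp y)
  have hnode : importanceEstimate p (nodeEvent x) r univ y ≤ N / (γ / M) :=
    (importanceEstimate_le hp0 (fun i _ => (hr i).1) y).trans <| by
      simpa using importanceWeightSum_le_card_div (S := univ) hp
        (fun i _ => div_pow_mul_card_nodeEvent γ hM x i) (by positivity) fun i _ => (hr i).2
  have hedge : importanceEstimate p (edgeEvent x) re E y ≤ #E / (γ / M ^ 2) :=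
    (importanceEstimate_le hp0 (fun e he => (hre e he).1) y).trans <|
      importanceWeightSum_le_card_div hp (fun e he => div_pow_mul_card_edgeEvent γ hM x (hE e he))
        (by positivity) fun e he => (hre e he).2
  have hα0 : 0 ≤ α := by rw [hα]; positivity
  rw [abs_of_nonneg (mul_nonneg hα0 (mabstaEstimate_nonneg hp0 (fun i => (hr i).1)
    (fun e he => (hre e he).1) y))]
  calc α * mabstaEstimate p x r re E y ≤ α * (N / (γ / M) + #E / (γ / M ^ 2)) :=
        mul_le_mul_of_nonneg_left (add_le_add hnode hedge) hα0
    _ = α * (M * (N + #E * M)) / γ := by field_simp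
    _ ≤ γ / γ := div_le_div_of_nonneg_right (hα ▸ div_mul_le_of_nonneg hγ.le _) hγ.le
    _ = 1 := div_self hγ.ne'

theorem mul_sum_mul_sq_mabstaEstimate_le (hM : 2 ≤ M) (hE : ∀ e ∈ E, e.1 ≠ e.2) (hγ : 0 < γ)
    (hα : α = γ / (M * (N + #E * M))) (hp : ∀ y, γ / M ^ N ≤ p y)
    (hr : ∀ i, r i ∈ Set.Icc (0 : ℝ) 1) (hre : ∀ e ∈ E, re e ∈ Set.Icc (0 : ℝ) 1) :
    α * ∑ y, p y * mabstaEstimate p x r re E y ^ 2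
      ≤ γ / M ^ N * ∑ y, mabstaEstimate p x r re E y := by
  have hM0 : (0 : ℝ) < M := by positivity
  have hM2 : (2 : ℝ) ≤ M := by exact_mod_cast hM
  have hp0 : ∀ y, 0 < p y := fun y => (by positivity : 0 < γ / M ^ N).trans_le (hp y)
  set U := importanceWeightSum p (nodeEvent x) r univ
  set V := importanceWeightSum p (edgeEvent x) re E
  have hU : 0 ≤ U := sum_nonneg fun i _ => div_nonneg (hr i).1 (sum_nonneg fun z _ => (hp0 z).le)
  have hV : 0 ≤ V :=
    sum_nonneg fun e he => div_nonneg (hre e he).1 (sum_nonneg fun z _ => (hp0 z).le)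
  have hα0 : 0 ≤ α := by rw [hα]; positivity
  have hαγ : α * (M * (N + #E * M)) ≤ γ := hα ▸ div_mul_le_of_nonneg hγ.le _
  have hnode : α * (N + 2 * #E) ≤ γ / M := by
    rw [le_div_iff₀ hM0]
    nlinarith [mul_nonneg (mul_nonneg hα0 (Nat.cast_nonneg (α := ℝ) #E))
      (mul_nonneg hM0.le (sub_nonneg.2 hM2))]
  have hedge : α * #E ≤ γ / M ^ 2 := by
    rw [le_div_iff₀ (by positivity)]
    nlinarith [mul_nonneg (mul_nonneg hα0 hM0.le) (Nat.cast_nonneg (α := ℝ) N)]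
  calc α * ∑ y, p y * mabstaEstimate p x r re E y ^ 2
      ≤ α * ((N + 2 * #E) * U + #E * V) :=
        mul_le_mul_of_nonneg_left (sum_mul_sq_mabstaEstimate_le hp0 hr hre) hα0
    _ ≤ γ / M * U + γ / M ^ 2 * V := by
        nlinarith [mul_le_mul_of_nonneg_right hnode hU, mul_le_mul_of_nonneg_right hedge hV]
    _ = γ / M ^ N * ∑ y, mabstaEstimate p x r re E y :=
        (div_pow_mul_sum_mabstaEstimate (by omega) hE).symm

theorem log_sum_mul_exp_mabstaEstimate_le (hM : 2 ≤ M) (hE : ∀ e ∈ E, e.1 ≠ e.2)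
    (hγ0 : 0 < γ) (hγ1 : γ < 1) (hα : α = γ / (M * (N + #E * M))) {w : (Fin N → Fin M) → ℝ}
    (hw : ∀ y, 0 < w y) (hp : ∀ y, p y = (1 - γ) * (w y / ∑ z, w z) + γ / M ^ N)
    (hr : ∀ i, r i ∈ Set.Icc (0 : ℝ) 1) (hre : ∀ e ∈ E, re e ∈ Set.Icc (0 : ℝ) 1) :
    log (∑ y, w y * exp (α * mabstaEstimate p x r re E y))
      ≤ log (∑ y, w y) + α / (1 - γ) * (∑ i, r i + ∑ e ∈ E, re e) := by
  have hM0 : (0 : ℝ) < M := by positivity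
  have hpc : ∀ y, γ / M ^ N ≤ p y := fun y =>
    hp y ▸ le_mul_div_sum_add hγ1.le (fun z => (hw z).le) y
  have : Nonempty (Fin N → Fin M) := ⟨x⟩
  rw [← sum_mul_mabstaEstimate fun y => (by positivity : (0 : ℝ) < γ / M ^ N).trans_le (hpc y)]
  exact log_sum_mul_exp_le_of_exploration hw hγ1 (by positivity) (hα ▸ by positivity) hp
    (abs_mul_mabstaEstimate_le_one (by omega) hE hγ0 hα hpc hr hre)
    (mul_sum_mul_sq_mabstaEstimate_le hM hE hγ0 hα hpc hr hre)

theorem sum_add_sum_eq_mabstaEstimate {Rn : Fin N → Fin M → ℝ}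
    {Rm : Fin N × Fin N → Fin M → Fin M → ℝ} {Rhat : Fin N → Fin M → ℝ}
    {Rhate : Fin N × Fin N → Fin M → Fin M → ℝ}
    (hRhat : ∀ i j, Rhat i j = if j = x i then Rn i j / ∑ z ∈ nodeEvent x i, p z else 0)
    (hRhate : ∀ e ∈ E, ∀ j k, Rhate e j k =
      if j = x e.1 ∧ k = x e.2 then Rm e j k / ∑ z ∈ edgeEvent x e, p z else 0)
    (y : Fin N → Fin M) :
    ∑ i, Rhat i (y i) + ∑ e ∈ E, Rhate e (y e.1) (y e.2)
      = mabstaEstimate p x (fun i => Rn i (x i)) (fun e => Rm e (x e.1) (x e.2)) E y := by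
  rw [mabstaEstimate, importanceEstimate, importanceEstimate]
  congr 1
  · refine sum_congr rfl fun i _ => ?_
    simp only [hRhat, mem_nodeEvent]
    split_ifs with h
    · rw [h]
    · rfl
  · refine sum_congr rfl fun e he => ?_
    simp only [hRhate e he, mem_edgeEvent]
    split_ifs with h
    · rw [h.1, h.2]
    · rfl

end Mabsta

theorem mabsta_log_weight_upper_bound_general
    (N M T : ℕ) (hM : 3 ≤ M)
    (E : Finset (Fin N × Fin N)) (hE : ∀ e ∈ E, e.1 ≠ e.2)
    (γ : ℝ) (hγ0 : 0 < γ) (hγ1 : γ < 1)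
    (α : ℝ) (hα : α = γ / ((M : ℝ) * ((N : ℝ) + (E.card : ℝ) * (M : ℝ))))
    (R : Fin T → Fin N → Fin M → ℝ)
    (hR : ∀ t i j, R t i j ∈ Set.Icc (0 : ℝ) 1)
    (Re : Fin T → Fin N × Fin N → Fin M → Fin M → ℝ)
    (hRe : ∀ t, ∀ e ∈ E, ∀ j k, Re t e j k ∈ Set.Icc (0 : ℝ) 1)
    (xs : Fin T → Fin N → Fin M)
    (w : ℕ → (Fin N → Fin M) → ℝ)
    (hw0 : ∀ y, w 0 y = 1)
    (p : Fin T → (Fin N → Fin M) → ℝ)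
    (hp : ∀ (t : Fin T) (y : Fin N → Fin M), p t y =
      (1 - γ) * (w t y / ∑ z : Fin N → Fin M, w t z) + γ / (M : ℝ) ^ N)
    (Rhat : Fin T → Fin N → Fin M → ℝ)
    (hRhat : ∀ (t : Fin T) (i : Fin N) (j : Fin M), Rhat t i j =
      if j = xs t i then
        R t i j /
          (∑ z ∈ Finset.univ.filter (fun z : Fin N → Fin M => z i = xs t i), p t z)
      else 0)
    (Rhate : Fin T → Fin N × Fin N → Fin M → Fin M → ℝ)
    (hRhate : ∀ (t : Fin T), ∀ e ∈ E, ∀ j k : Fin M, Rhate t e j k =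
      if j = xs t e.1 ∧ k = xs t e.2 then
        Re t e j k /
          (∑ z ∈ Finset.univ.filter
            (fun z : Fin N → Fin M => z e.1 = xs t e.1 ∧ z e.2 = xs t e.2), p t z)
      else 0)
    (RhatArm : Fin T → (Fin N → Fin M) → ℝ)
    (hRhatArm : ∀ (t : Fin T) (y : Fin N → Fin M), RhatArm t y =
      ∑ i, Rhat t i (y i) + ∑ e ∈ E, Rhate t e (y e.1) (y e.2))
    (hwrec : ∀ (t : Fin T) (y : Fin N → Fin M),
      w (t + 1) y = w t y * Real.exp (α * RhatArm t y)) :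
    Real.log ((∑ y : Fin N → Fin M, w T y) / (∑ y : Fin N → Fin M, w 0 y))
      ≤ α / (1 - γ)
          * (∑ t, (∑ i, R t i (xs t i) + ∑ e ∈ E, Re t e (xs t e.1) (xs t e.2)))
        + (Real.exp 1 - 2) * α ^ 2 / (1 - γ) * ((E.card : ℝ) / (M : ℝ) ^ (N - 2))
            * ∑ t, ∑ y : Fin N → Fin M, RhatArm t y := by
  have hwpos := pos_of_succ_eq_mul_exp (fun y => (hw0 y).symm ▸ one_pos) hwrec
  have : Nonempty (Fin N → Fin M) := ⟨fun _ => ⟨0, by omega⟩⟩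
  have hest : ∀ t y, RhatArm t y = mabstaEstimate (p t) (xs t) (fun i => R t i (xs t i))
      (fun e => Re t e (xs t e.1) (xs t e.2)) E y := fun t y =>
    (hRhatArm t y).trans (sum_add_sum_eq_mabstaEstimate (hRhat t) (hRhate t) y)
  have hstep : ∀ t : Fin T, log (∑ y, w (t + 1) y) ≤ log (∑ y, w t y)
      + α / (1 - γ) * (∑ i, R t i (xs t i) + ∑ e ∈ E, Re t e (xs t e.1) (xs t e.2)) := fun t => by
    simpa only [hwrec, hest] using log_sum_mul_exp_mabstaEstimate_le (by omega) hE hγ0 hγ1 hα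
      (hwpos t t.is_lt.le) (hp t) (fun i => hR t i _) (fun e he => hRe t e he _ _)
  have hp0 : ∀ t y, 0 ≤ p t y := fun t y => hp t y ▸ (le_mul_div_sum_add hγ1.le
    (fun z => (hwpos t t.is_lt.le z).le) y).trans' (by positivity)
  have hvariance : 0 ≤ (exp 1 - 2) * α ^ 2 / (1 - γ) * ((#E : ℝ) / (M : ℝ) ^ (N - 2))
      * ∑ t, ∑ y, RhatArm t y := by
    have : 0 ≤ exp 1 - 2 := by linarith [add_one_le_exp 1]
    have : 0 < 1 - γ := by linarith
    have : 0 ≤ ∑ t, ∑ y, RhatArm t y := sum_nonneg fun t _ => sum_nonneg fun y _ =>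
      hest t y ▸ mabstaEstimate_nonneg (hp0 t) (fun i => (hR t i _).1)
        (fun e he => (hRe t e he _ _).1) y
    positivity
  calc log ((∑ y, w T y) / ∑ y, w 0 y)
      ≤ ∑ t, α / (1 - γ) * (∑ i, R t i (xs t i) + ∑ e ∈ E, Re t e (xs t e.1) (xs t e.2)) :=
        log_div_le_sum_of_log_succ_le (W := fun n => ∑ y, w n y)
          (fun n hn => sum_pos (fun y _ => hwpos n hn y) univ_nonempty) hstep
    _ ≤ _ := by rw [← mul_sum]; exact le_add_of_nonneg_right hvariance

/-- **eq. (19) of the paper.**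
For any fixed realized sequence of drawn arms `x^1,…,x^T ∈ F`, the MABSTA
weights satisfy
`ln(W_{T+1}/W_1) ≤ (α/(1−γ))·R̂_total
  + ((e−2)α²/(1−γ))·(|E|/M^{N−2})·Σ_{t=1}^T Σ_{y∈F} R̂_y(t)`. -/
theorem mabsta_log_weight_upper_bound
    (N M T : ℕ) (hN : 2 ≤ N) (hM : 3 ≤ M) (hT : 1 ≤ T)
    (E : Finset (Fin N × Fin N)) (hE : ∀ e ∈ E, e.1 ≠ e.2) (hEcard : 3 ≤ E.card)
    (γ : ℝ) (hγ0 : 0 < γ) (hγ1 : γ < 1)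
    (α : ℝ) (hα : α = γ / ((M : ℝ) * ((N : ℝ) + (E.card : ℝ) * (M : ℝ))))
    (R : Fin T → Fin N → Fin M → ℝ)
    (hR : ∀ t i j, R t i j ∈ Set.Icc (0 : ℝ) 1)
    (Re : Fin T → Fin N × Fin N → Fin M → Fin M → ℝ)
    (hRe : ∀ t, ∀ e ∈ E, ∀ j k, Re t e j k ∈ Set.Icc (0 : ℝ) 1)
    (xs : Fin T → Fin N → Fin M)
    (w : ℕ → (Fin N → Fin M) → ℝ)
    (hw0 : ∀ y, w 0 y = 1)
    (p : Fin T → (Fin N → Fin M) → ℝ)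
    (hp : ∀ (t : Fin T) (y : Fin N → Fin M), p t y =
      (1 - γ) * (w t y / ∑ z : Fin N → Fin M, w t z) + γ / (M : ℝ) ^ N)
    (Rhat : Fin T → Fin N → Fin M → ℝ)
    (hRhat : ∀ (t : Fin T) (i : Fin N) (j : Fin M), Rhat t i j =
      if j = xs t i then
        R t i j /
          (∑ z ∈ Finset.univ.filter (fun z : Fin N → Fin M => z i = xs t i), p t z)
      else 0)
    (Rhate : Fin T → Fin N × Fin N → Fin M → Fin M → ℝ)
    (hRhate : ∀ (t : Fin T), ∀ e ∈ E, ∀ j k : Fin M, Rhate t e j k =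
      if j = xs t e.1 ∧ k = xs t e.2 then
        Re t e j k /
          (∑ z ∈ Finset.univ.filter
            (fun z : Fin N → Fin M => z e.1 = xs t e.1 ∧ z e.2 = xs t e.2), p t z)
      else 0)
    (RhatArm : Fin T → (Fin N → Fin M) → ℝ)
    (hRhatArm : ∀ (t : Fin T) (y : Fin N → Fin M), RhatArm t y =
      ∑ i, Rhat t i (y i) + ∑ e ∈ E, Rhate t e (y e.1) (y e.2))
    (hwrec : ∀ (t : Fin T) (y : Fin N → Fin M),
      w (t + 1) y = w t y * Real.exp (α * RhatArm t y)) :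
    Real.log ((∑ y : Fin N → Fin M, w T y) / (∑ y : Fin N → Fin M, w 0 y))
      ≤ α / (1 - γ)
          * (∑ t, (∑ i, R t i (xs t i) + ∑ e ∈ E, Re t e (xs t e.1) (xs t e.2)))
        + (Real.exp 1 - 2) * α ^ 2 / (1 - γ) * ((E.card : ℝ) / (M : ℝ) ^ (N - 2))
            * ∑ t, ∑ y : Fin N → Fin M, RhatArm t y :=
  mabsta_log_weight_upper_bound_general N M T hM E hE γ hγ0 hγ1 α hα R hR Re hRe xs w hw0 p hp Rhat
    hRhat Rhate hRhate RhatArm hRhatArm hwrec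
end
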